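/- arXiv:2311.07496 — 4 statements merged into one kernel-verified Lean document; each statement's English description precedes it below -/
import Mathlib

section
/- Let a be a positive integer. Then MO(a;n) = 0 for every n < a(a+1)/2, and for every integer j with 0 ≤ j ≤ a one has MO(a; a(a+1)/2 + j) = c_3(j). (Equivalently, q^{-a(a+1)/2}·𝒰_a(q) agrees with ∏_{n≥1}(1−q^n)^{-3} up to an error of order O(q^{a+1}).) -/
/-
Writing `s_i = u_i + 1 + v_i` turns the summand `s_1 ⋯ s_a` of `MO(a; n)` into a count of
triples `(k, u, v)` with `0 < k_1 < ⋯ < k_a` and `∑ (u_i + v_i + 1) k_i = n`. Parametrize `k` by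
its gaps `g_r = k_r - k_{r-1} - 1`; then `∑ k_i = a(a+1)/2 + ∑ g_r (a - r)`, so nothing lies below
`a(a+1)/2`. At `a(a+1)/2 + j` with `j ≤ a`, a gap `g_r > 0` with `r ≤ i` together with
`u_i + v_i > 0` would cost `(a - r) + (i + 1) > a`, so `k_i = i + 1` wherever `u_i + v_i > 0`, and
the condition becomes `∑ g_r (a - r) + ∑ u_i (i + 1) + ∑ v_i (i + 1) = j`. Read as multiplicity
vectors, `g`, `u` and `v` are three partitions of total size `j` (all parts are at most `j ≤ a`),
which is what `c_3(j)` counts.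
-/

open Finset

/-- `MO a n` is MacMahon's coefficient: the sum of the products `s_1 ⋯ s_a` over all
strictly increasing tuples `0 < k_1 < ⋯ < k_a` of positive integers and positive
integers `s_1, …, s_a` with `s_1*k_1 + ⋯ + s_a*k_a = n` (all such data satisfy
`k_i, s_i ≤ n`, so we may sum over a finite set); in particular `MO a 0 = 0` for `a ≥ 1`. -/
def MO (a n : ℕ) : ℕ :=
  ∑ f ∈ Finset.univ.filter (fun f : Fin a → Fin (n + 1) × Fin (n + 1) =>
      (∀ i, 0 < ((f i).1 : ℕ) ∧ 0 < ((f i).2 : ℕ)) ∧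
      (∀ i j : Fin a, i < j → (f i).1 < (f j).1) ∧
      (∑ i, ((f i).2 : ℕ) * ((f i).1 : ℕ)) = n),
    ∏ i, ((f i).2 : ℕ)

/-- `c3 n` is the number of 3-colored partitions of `n`, i.e. the `n`-th coefficient of
the formal power series `∏_{j ≥ 1} (1 - q^j)^{-3}`; in particular `c3 0 = 1`. -/
def c3 (n : ℕ) : ℕ :=
  ∑ x ∈ (Finset.range (n+1) ×ˢ Finset.range (n+1) ×ˢ Finset.range (n+1)).filter
      (fun x : ℕ × ℕ × ℕ => x.1 + x.2.1 + x.2.2 = n),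
    Fintype.card (Nat.Partition x.1) * Fintype.card (Nat.Partition x.2.1) *
      Fintype.card (Nat.Partition x.2.2)

section SumBounds

variable {ι : Type*} [Fintype ι] {c w : ι → ℕ}

lemma le_sum_mul_of_pos_right {i : ι} (hw : 0 < w i) : c i ≤ ∑ j, c j * w j :=
  (Nat.le_mul_of_pos_right _ hw).trans
    (single_le_sum (f := fun j => c j * w j) (fun _ _ => Nat.zero_le _) (mem_univ i))

lemma le_sum_mul_of_pos_left {i : ι} (hc : 0 < c i) : w i ≤ ∑ j, c j * w j :=
  (Nat.le_mul_of_pos_left _ hc).trans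
    (single_le_sum (f := fun j => c j * w j) (fun _ _ => Nat.zero_le _) (mem_univ i))

lemma finite_multiplicities (hpos : ∀ i, 0 < w i) (x : ℕ) :
    {c : ι → ℕ | ∑ i, c i * w i = x}.Finite := by
  classical
  refine (Fintype.piFinset fun _ => range (x + 1)).finite_toSet.subset fun c hc => ?_
  exact mem_coe.2 <| Fintype.mem_piFinset.2 fun i =>
    mem_range.2 <| Nat.lt_succ_of_le <| (le_sum_mul_of_pos_right (hpos i)).trans_eq hc

end SumBounds

lemma Fin.sum_sub_val (a : ℕ) : ∑ r : Fin a, (a - (r : ℕ)) = a * (a + 1) / 2 := by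
  have hreflect : ∑ r : Fin a, (a - (r : ℕ)) = ∑ r ∈ range (a + 1), r := by
    rw [Fin.sum_univ_eq_sum_range (fun r => a - r), ← sum_range_reflect, sum_range_succ', add_zero]
    exact sum_congr rfl fun r hr => by have := mem_range.1 hr; omega
  rw [hreflect, sum_range_id, Nat.add_sub_cancel, mul_comm]

section Multiplicities

variable {ι α : Type*} [Fintype ι] [DecidableEq ι] [DecidableEq α] {w : ι → α}

lemma count_sum_replicate (hw : Function.Injective w) (c : ι → ℕ) (j : ι) :
    (∑ i, Multiset.replicate (c i) (w i)).count (w j) = c j := by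
  simp only [Multiset.count_sum', Multiset.count_replicate, hw.eq_iff, sum_ite_eq', mem_univ,
    if_true]

lemma sum_replicate_count {M : Multiset α} (hM : ∀ m ∈ M, m ∈ Set.range w)
    (hw : Function.Injective w) :
    ∑ i, Multiset.replicate (M.count (w i)) (w i) = M := by
  ext m
  by_cases hm : m ∈ Set.range w
  · obtain ⟨j, rfl⟩ := hm
    exact count_sum_replicate hw _ j
  · rw [Multiset.count_eq_zero.2 fun h => hm (hM m h), Multiset.count_sum']
    exact sum_eq_zero fun i _ => by
      rw [Multiset.count_replicate, if_neg fun h => hm ⟨i, h⟩]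

end Multiplicities

section Partitions

variable {ι : Type*} [Fintype ι] [DecidableEq ι] {w : ι → ℕ}

def multiplicitiesEquivPartition (hw : Function.Injective w) (hpos : ∀ i, 0 < w i) {x : ℕ}
    (hcover : ∀ m, 0 < m → m ≤ x → m ∈ Set.range w) :
    {c : ι → ℕ // ∑ i, c i * w i = x} ≃ Nat.Partition x where
  toFun c :=
    { parts := ∑ i, Multiset.replicate (c.1 i) (w i)
      parts_pos := fun hm => by
        obtain ⟨i, -, hi⟩ := Multiset.mem_sum.1 hm
        rw [Multiset.eq_of_mem_replicate hi]
        exact hpos i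
      parts_sum := by
        simp only [Multiset.sum_sum, Multiset.sum_replicate, smul_eq_mul]
        exact c.2 }
  invFun P := ⟨fun i => P.parts.count (w i), by
    have h := congrArg Multiset.sum (sum_replicate_count
      (fun m hm => hcover m (P.parts_pos hm) (Nat.Partition.le_of_mem_parts hm)) hw)
    simpa only [Multiset.sum_sum, Multiset.sum_replicate, smul_eq_mul, P.parts_sum] using h⟩
  left_inv c := Subtype.ext (funext fun j => count_sum_replicate hw c.1 j)
  right_inv P := Nat.Partition.ext (sum_replicate_count
    (fun m hm => hcover m (P.parts_pos hm) (Nat.Partition.le_of_mem_parts hm)) hw)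

lemma ncard_multiplicities (hw : Function.Injective w) (hpos : ∀ i, 0 < w i) {x : ℕ}
    (hcover : ∀ m, 0 < m → m ≤ x → m ∈ Set.range w) :
    {c : ι → ℕ | ∑ i, c i * w i = x}.ncard = Fintype.card (Nat.Partition x) := by
  rw [← Nat.card_coe_set_eq, ← Nat.card_eq_fintype_card]
  exact Nat.card_congr (multiplicitiesEquivPartition hw hpos hcover)

end Partitions

lemma ncard_setOf_add_add_eq {α β γ : Type*} (f : α → ℕ) (g : β → ℕ) (h : γ → ℕ) {j : ℕ}
    (hf : ∀ x, {a | f a = x}.Finite) (hg : ∀ y, {b | g b = y}.Finite)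
    (hh : ∀ z, {c | h c = z}.Finite) :
    {p : α × β × γ | f p.1 + g p.2.1 + h p.2.2 = j}.ncard =
      ∑ x ∈ (range (j + 1) ×ˢ range (j + 1) ×ˢ range (j + 1)).filter
          (fun x : ℕ × ℕ × ℕ => x.1 + x.2.1 + x.2.2 = j),
        {a | f a = x.1}.ncard * {b | g b = x.2.1}.ncard * {c | h c = x.2.2}.ncard := by
  set F := (range (j + 1) ×ˢ range (j + 1) ×ˢ range (j + 1)).filter
    (fun x : ℕ × ℕ × ℕ => x.1 + x.2.1 + x.2.2 = j)
  have hF : ∀ x, x ∈ F ↔ x.1 + x.2.1 + x.2.2 = j := fun x => by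
    simp only [F, mem_filter, mem_product, mem_range]
    omega
  let e : {p : α × β × γ | f p.1 + g p.2.1 + h p.2.2 = j} ≃
      Σ x : F, {a | f a = x.1.1} × {b | g b = x.1.2.1} × {c | h c = x.1.2.2} :=
    { toFun := fun p => ⟨⟨(f p.1.1, g p.1.2.1, h p.1.2.2), (hF _).2 p.2⟩,
        ⟨p.1.1, rfl⟩, ⟨p.1.2.1, rfl⟩, ⟨p.1.2.2, rfl⟩⟩
      invFun := fun q => ⟨(q.2.1, q.2.2.1, q.2.2.2), by
        obtain ⟨⟨x, hx⟩, ⟨a, ha⟩, ⟨b, hb⟩, ⟨c, hc⟩⟩ := q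
        exact (congrArg₂ _ (congrArg₂ _ ha hb) hc).trans ((hF x).1 hx)⟩
      left_inv := fun p => rfl
      right_inv := by
        rintro ⟨⟨⟨x, y, z⟩, hx⟩, ⟨a, ha⟩, ⟨b, hb⟩, ⟨c, hc⟩⟩
        simp only [Set.mem_ofPred_eq] at ha hb hc
        subst ha hb hc
        rfl }
  have hfin : ∀ x : F, Finite ({a | f a = x.1.1} × {b | g b = x.1.2.1} × {c | h c = x.1.2.2}) :=
    fun x => by
      have := (hf x.1.1).to_subtype
      have := (hg x.1.2.1).to_subtype
      have := (hh x.1.2.2).to_subtype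
      infer_instance
  rw [← Nat.card_coe_set_eq, Nat.card_congr e, Nat.card_sigma, ← sum_coe_sort F]
  refine sum_congr rfl fun x _ => ?_
  simp only [Nat.card_prod, Nat.card_coe_set_eq, mul_assoc]

namespace MacMahon

variable {a : ℕ}

def ofGaps (g : Fin a → ℕ) (i : Fin a) : ℕ := ∑ r ∈ Iic i, (g r + 1)

lemma ofGaps_eq_add_sum_Iic (g : Fin a → ℕ) (i : Fin a) :
    ofGaps g i = i + 1 + ∑ r ∈ Iic i, g r := by
  rw [ofGaps, sum_add_distrib, sum_const, Fin.card_Iic, smul_eq_mul, mul_one, add_comm]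

lemma ofGaps_eq_add_sum_Iio (g : Fin a → ℕ) (i : Fin a) :
    ofGaps g i = g i + 1 + ∑ r ∈ Iio i, (g r + 1) := by
  rw [ofGaps, Iic_eq_cons_Iio, sum_cons]

lemma ofGaps_pos (g : Fin a → ℕ) (i : Fin a) : 0 < ofGaps g i := by
  rw [ofGaps_eq_add_sum_Iic]; omega

lemma strictMono_ofGaps (g : Fin a → ℕ) : StrictMono (ofGaps g) := fun i i' h =>
  sum_lt_sum_of_subset (Iic_subset_Iic.2 h.le) (mem_Iic.2 le_rfl) (by simpa using h)
    (Nat.succ_pos _) (fun _ _ _ => Nat.zero_le _)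

lemma ofGaps_injective : Function.Injective (ofGaps : (Fin a → ℕ) → Fin a → ℕ) := by
  intro g g' h
  funext i
  induction i using WellFoundedLT.induction with
  | _ i ih =>
    have hi := congrFun h i
    rw [ofGaps_eq_add_sum_Iio, ofGaps_eq_add_sum_Iio,
      sum_congr rfl fun r hr => by rw [ih r (mem_Iio.1 hr)]] at hi
    omega

lemma exists_ofGaps_eq {k : Fin a → ℕ} (hk : StrictMono k) (hpos : ∀ i, 0 < k i) :
    ∃ g, ofGaps g = k := by
  -- `(Iio i).sup k` is the previous value `k (i - 1)`, or `0` when `i = 0`.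
  refine ⟨fun i => k i - (Iio i).sup k - 1, funext fun i => ?_⟩
  induction i using WellFoundedLT.induction with
  | _ i ih =>
    rw [ofGaps_eq_add_sum_Iio]
    by_cases hmin : IsMin i
    · rw [Iio_eq_empty.2 hmin, sum_empty, sup_empty, Nat.bot_eq_zero]
      have := hpos i
      omega
    · have hpred := Order.pred_lt_of_not_isMin hmin
      have hsup : (Iio i).sup k = k (Order.pred i) := by
        rw [← Iic_pred_eq_Iio_of_not_isMin hmin]
        exact le_antisymm (Finset.sup_le fun r hr => hk.monotone (mem_Iic.1 hr))
          (le_sup (mem_Iic.2 le_rfl))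
      rw [← Iic_pred_eq_Iio_of_not_isMin hmin, ← ofGaps, ih _ hpred, ← hsup,
        Iic_pred_eq_Iio_of_not_isMin hmin]
      have := hk hpred
      omega

lemma sum_ofGaps (g : Fin a → ℕ) : ∑ i, ofGaps g i = ∑ r, (g r + 1) * (a - r) := by
  simp only [ofGaps]
  rw [sum_comm' (t' := univ) (s' := Ici) (fun i r => by simp)]
  simp only [sum_const, Fin.card_Ici, smul_eq_mul, mul_comm]

lemma sum_succ_mul_ofGaps (g c : Fin a → ℕ) :
    ∑ i, (c i + 1) * ofGaps g i = a * (a + 1) / 2 + ∑ r, g r * (a - r) +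
      ∑ i, c i * (i + 1) + ∑ i, c i * ∑ r ∈ Iic i, g r := by
  have hsplit : ∀ i, (c i + 1) * ofGaps g i =
      ofGaps g i + (c i * (i + 1) + c i * ∑ r ∈ Iic i, g r) := fun i => by
    rw [ofGaps_eq_add_sum_Iic g i]
    ring
  simp only [hsplit, sum_add_distrib, sum_ofGaps, add_mul, one_mul, Fin.sum_sub_val]
  ring

/-- A nonzero term `c i * g r` with `r ≤ i` already costs `(a - r) + (i + 1) > a`. -/
lemma sum_mul_sum_Iic_eq_zero {g c : Fin a → ℕ}
    (hle : ∑ r, g r * (a - r) + ∑ i, c i * (i + 1) ≤ a) :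
    ∑ i, c i * ∑ r ∈ Iic i, g r = 0 := by
  refine sum_eq_zero fun i _ => ?_
  by_contra hne
  obtain ⟨hc, hg⟩ := mul_ne_zero_iff.1 hne
  obtain ⟨r, hr, hgr⟩ := exists_ne_zero_of_sum_ne_zero hg
  have hG : a - r ≤ ∑ r, g r * (a - r) :=
    le_sum_mul_of_pos_left (w := fun r : Fin a => a - (r : ℕ)) (Nat.pos_of_ne_zero hgr)
  have hC : (i : ℕ) + 1 ≤ ∑ i, c i * (i + 1) :=
    le_sum_mul_of_pos_left (w := fun i : Fin a => (i : ℕ) + 1) (Nat.pos_of_ne_zero hc)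
  have hri : r ≤ i := mem_Iic.1 hr
  have := i.isLt
  omega

lemma sum_mul_ofGaps_eq_iff {j : ℕ} (hj : j ≤ a) (g u v : Fin a → ℕ) :
    ∑ i, (u i + v i + 1) * ofGaps g i = a * (a + 1) / 2 + j ↔
      ∑ r, g r * (a - r) + ∑ i, u i * (i + 1) + ∑ i, v i * (i + 1) = j := by
  have hsum := sum_succ_mul_ofGaps g (fun i => u i + v i)
  have hvanish := sum_mul_sum_Iic_eq_zero (g := g) (c := fun i => u i + v i)
  have hsplit : ∑ i, (u i + v i) * ((i : ℕ) + 1) = ∑ i, u i * (i + 1) + ∑ i, v i * (i + 1) := by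
    simp only [add_mul, sum_add_distrib]
  constructor <;> intro h <;> have := hvanish (by omega) <;> omega

def splitTuples (a n : ℕ) : Set ((Fin a → ℕ) × (Fin a → ℕ) × (Fin a → ℕ)) :=
  {p | StrictMono p.1 ∧ (∀ i, 0 < p.1 i) ∧ ∑ i, (p.2.1 i + p.2.2 i + 1) * p.1 i = n}

lemma splitTuples_eq_image (n : ℕ) :
    splitTuples a n =
      Prod.map ofGaps id '' {p | ∑ i, (p.2.1 i + p.2.2 i + 1) * ofGaps p.1 i = n} := by
  ext ⟨k, u, v⟩
  simp only [splitTuples, Set.mem_image, Set.mem_ofPred_eq, Prod.exists, Prod.map, id,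
    Prod.mk.injEq]
  constructor
  · rintro ⟨hk, hpos, hsum⟩
    obtain ⟨g, rfl⟩ := exists_ofGaps_eq hk hpos
    exact ⟨g, u, v, hsum, rfl, rfl, rfl⟩
  · rintro ⟨g, u, v, hsum, rfl, rfl, rfl⟩
    exact ⟨strictMono_ofGaps g, ofGaps_pos g, hsum⟩

lemma ncard_splitTuples (n : ℕ) :
    (splitTuples a n).ncard = {p : (Fin a → ℕ) × (Fin a → ℕ) × (Fin a → ℕ) |
      ∑ i, (p.2.1 i + p.2.2 i + 1) * ofGaps p.1 i = n}.ncard := by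
  rw [splitTuples_eq_image,
    Set.ncard_image_of_injective _ (ofGaps_injective.prodMap Function.injective_id)]

/-- Splitting each `s i = u i + 1 + v i` counts the factor `s i` of MacMahon's summand. -/
lemma MO_eq_ncard_splitTuples (n : ℕ) : MO a n = (splitTuples a n).ncard := by
  classical
  set S := univ.filter (fun f : Fin a → Fin (n + 1) × Fin (n + 1) =>
      (∀ i, 0 < ((f i).1 : ℕ) ∧ 0 < ((f i).2 : ℕ)) ∧
      (∀ i j : Fin a, i < j → (f i).1 < (f j).1) ∧
      (∑ i, ((f i).2 : ℕ) * ((f i).1 : ℕ)) = n)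
  set T := fun f : Fin a → Fin (n + 1) × Fin (n + 1) =>
    Fintype.piFinset fun i => antidiagonal (((f i).2 : ℕ) - 1)
  let ψ : (Σ _ : Fin a → Fin (n + 1) × Fin (n + 1), Fin a → ℕ × ℕ) →
      (Fin a → ℕ) × (Fin a → ℕ) × (Fin a → ℕ) :=
    fun q => (fun i => (q.1 i).1, fun i => (q.2 i).1, fun i => (q.2 i).2)
  have hmemT : ∀ f uv, uv ∈ T f ↔ ∀ i, (uv i).1 + (uv i).2 = ((f i).2 : ℕ) - 1 := fun f uv => by
    simp only [T, Fintype.mem_piFinset, HasAntidiagonal.mem_antidiagonal]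
  have hcard : ∀ f ∈ S, ∏ i, ((f i).2 : ℕ) = #(T f) := fun f hf => by
    rw [Fintype.card_piFinset]
    refine prod_congr rfl fun i _ => ?_
    rw [Nat.card_antidiagonal, Nat.sub_add_cancel ((mem_filter.1 hf).2.1 i).2]
  have hinj : Set.InjOn ψ ↑(S.sigma T) := by
    rintro ⟨f, uv⟩ hq ⟨f', uv'⟩ hq' heq
    simp only [coe_sigma, Set.mem_sigma_iff, mem_coe] at hq hq'
    simp only [ψ, Prod.mk.injEq, funext_iff] at heq
    obtain ⟨hk, hu, hv⟩ := heq
    obtain rfl : uv = uv' := funext fun i => Prod.ext (hu i) (hv i)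
    obtain rfl : f = f' := funext fun i => by
      have hs := ((mem_filter.1 hq.1).2.1 i).2
      have hs' := ((mem_filter.1 hq'.1).2.1 i).2
      have h := (hmemT f uv).1 hq.2 i
      have h' := (hmemT f' uv).1 hq'.2 i
      exact Prod.ext (Fin.ext (hk i)) (Fin.ext (by omega))
    rfl
  have himage : ψ '' ↑(S.sigma T) = splitTuples a n := by
    ext ⟨k, u, v⟩
    simp only [splitTuples, Set.mem_ofPred_eq]
    constructor
    · rintro ⟨⟨f, uv⟩, hq, hψ⟩
      simp only [S, coe_sigma, Set.mem_sigma_iff, mem_coe, mem_filter, hmemT] at hq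
      obtain ⟨⟨-, hpos, hmono, hsum⟩, huv⟩ := hq
      simp only [ψ, Prod.mk.injEq] at hψ
      obtain ⟨rfl, rfl, rfl⟩ := hψ
      refine ⟨fun i j h => hmono i j h, fun i => (hpos i).1, ?_⟩
      refine (sum_congr rfl fun i _ => ?_).trans hsum
      rw [huv i, Nat.sub_add_cancel (hpos i).2]
    · rintro ⟨hk, hpos, hsum⟩
      have hbound : ∀ i, k i < n + 1 ∧ u i + v i + 1 < n + 1 := fun i => by
        have : k i ≤ ∑ j, (u j + v j + 1) * k j :=
          le_sum_mul_of_pos_left (c := fun j => u j + v j + 1) (Nat.succ_pos _)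
        have : u i + v i + 1 ≤ ∑ j, (u j + v j + 1) * k j :=
          le_sum_mul_of_pos_right (c := fun j => u j + v j + 1) (hpos i)
        omega
      refine ⟨⟨fun i => (⟨k i, (hbound i).1⟩, ⟨u i + v i + 1, (hbound i).2⟩),
        fun i => (u i, v i)⟩, ?_, rfl⟩
      simp only [S, coe_sigma, Set.mem_sigma_iff, mem_coe, mem_filter, hmemT, mem_univ, true_and]
      exact ⟨⟨fun i => ⟨hpos i, Nat.succ_pos _⟩, fun i j h => hk h, hsum⟩, fun i => rfl⟩
  rw [MO, sum_congr rfl hcard, ← card_sigma, ← Set.ncard_coe_finset, ← hinj.ncard_image, himage]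

def multiplicityTriples (a j : ℕ) : Set ((Fin a → ℕ) × (Fin a → ℕ) × (Fin a → ℕ)) :=
  {p | ∑ r, p.1 r * (a - r) + ∑ i, p.2.1 i * (i + 1) + ∑ i, p.2.2 i * (i + 1) = j}

lemma MO_eq_zero_of_lt {n : ℕ} (hn : n < a * (a + 1) / 2) : MO a n = 0 := by
  rw [MO_eq_ncard_splitTuples, ncard_splitTuples]
  refine (congrArg Set.ncard (Set.eq_empty_of_forall_notMem fun p hp => ?_)).trans
    (Set.ncard_empty _)
  have := sum_succ_mul_ofGaps p.1 (fun i => p.2.1 i + p.2.2 i)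
  have : ∑ i, (p.2.1 i + p.2.2 i + 1) * ofGaps p.1 i = n := hp
  omega

lemma MO_eq_ncard_multiplicityTriples {j : ℕ} (hj : j ≤ a) :
    MO a (a * (a + 1) / 2 + j) = (multiplicityTriples a j).ncard := by
  rw [MO_eq_ncard_splitTuples, ncard_splitTuples]
  exact congrArg _ (Set.ext fun p => sum_mul_ofGaps_eq_iff hj p.1 p.2.1 p.2.2)

lemma ncard_multiplicityTriples {j : ℕ} (hj : j ≤ a) :
    (multiplicityTriples a j).ncard = c3 j := by
  have hw₁ : ∀ r : Fin a, 0 < a - (r : ℕ) := fun r => Nat.sub_pos_of_lt r.isLt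
  have hw₂ : ∀ i : Fin a, 0 < (i : ℕ) + 1 := fun i => Nat.succ_pos _
  have hinj₁ : Function.Injective fun r : Fin a => a - (r : ℕ) := fun r r' h =>
    Fin.ext (by have := r.isLt; have := r'.isLt; simp only at h; omega)
  have hinj₂ : Function.Injective fun i : Fin a => (i : ℕ) + 1 :=
    (add_left_injective 1).comp Fin.val_injective
  have hcover₁ : ∀ m, 0 < m → m ≤ a → m ∈ Set.range fun r : Fin a => a - (r : ℕ) :=
    fun m h0 hm => ⟨⟨a - m, by omega⟩, by simp only; omega⟩
  have hcover₂ : ∀ m, 0 < m → m ≤ a → m ∈ Set.range fun i : Fin a => (i : ℕ) + 1 :=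
    fun m h0 hm => ⟨⟨m - 1, by omega⟩, by simp only; omega⟩
  rw [multiplicityTriples, ncard_setOf_add_add_eq _ _ _ (finite_multiplicities hw₁)
    (finite_multiplicities hw₂) (finite_multiplicities hw₂), c3]
  refine sum_congr rfl fun x hx => ?_
  obtain ⟨hx₁, hx₂, hx₃⟩ : x.1 ≤ a ∧ x.2.1 ≤ a ∧ x.2.2 ≤ a := by
    simp only [mem_filter] at hx
    omega
  rw [ncard_multiplicities hinj₁ hw₁ fun m h0 hm => hcover₁ m h0 (hm.trans hx₁),
    ncard_multiplicities hinj₂ hw₂ fun m h0 hm => hcover₂ m h0 (hm.trans hx₂),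
    ncard_multiplicities hinj₂ hw₂ fun m h0 hm => hcover₂ m h0 (hm.trans hx₃)]

end MacMahon

theorem MO_initial_coefficients_general (a : ℕ) :
    (∀ n : ℕ, n < a * (a + 1) / 2 → MO a n = 0) ∧
    (∀ j : ℕ, j ≤ a → MO a (a * (a + 1) / 2 + j) = c3 j) :=
  ⟨fun _ hn => MacMahon.MO_eq_zero_of_lt hn, fun _ hj =>
    (MacMahon.MO_eq_ncard_multiplicityTriples hj).trans (MacMahon.ncard_multiplicityTriples hj)⟩

/-- for a positive integer `a`, `MO (a; n) = 0` for all `n < a(a+1)/2`,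
and `MO (a; a(a+1)/2 + j) = c3 j` for all `0 ≤ j ≤ a`. -/
theorem MO_initial_coefficients (a : ℕ) (ha : 0 < a) :
    (∀ n : ℕ, n < a * (a + 1) / 2 → MO a n = 0) ∧
    (∀ j : ℕ, j ≤ a → MO a (a * (a + 1) / 2 + j) = c3 j) :=
  MO_initial_coefficients_general a
end

section
/- If a is a positive integer and n is an integer with a ≤ n ≤ 2a, then M(a;n) = binom(a+n−1, n−a) + binom(a+n−2, n−a−1), with the convention that a binomial coefficient with negative lower index is 0 (so M(a;a) = 1). -/
/-!
Multiplying `𝒰*_a` by `(1 - X)^(2a)` turns each factor `X^k/(1 - X^k)^2` into `X · w_k` with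
`w_k = X^(k-1) (1 - X)^2/(1 - X^k)^2` (`weight k`), so that `w_1 = 1` and `X^(k-1) ∣ w_k`. Hence
`(1 - X)^(2a) 𝒰*_a = X^a Σ_{b ≤ a} h_b(w_2, …, w_n)` modulo `X^(n+1)`, with `h_b` the complete
homogeneous symmetric polynomial. The identity
`(1 - X^(k-1)) (1 - X^(k+1)) + X^(k-1) (1 - X)^2 = (1 - X^k)^2` makes
`Σ_b h_b(w_2, …, w_n) = ∏_{k=2}^n 1/(1 - w_k)` telescope to `(1 + X) (1 - X^n)/(1 - X^(n+1))`,
and cutting the sum at `b ≤ a` only changes it by `O(X^(a+1))`. For `n ≤ 2a` this gives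
`𝒰*_a ≡ X^a (1 + X)/(1 - X)^(2a)` modulo `X^(n+1)`, whose coefficient of `X^n` is the claimed sum
of binomial coefficients.
-/

open Finset

/-- `M a n` is the coefficient of Amdeberhan-Andrews-Tauraso: the sum of the products
`s_1 ⋯ s_a` over all weakly increasing tuples `1 ≤ k_1 ≤ ⋯ ≤ k_a` of positive integers
and positive integers `s_1, …, s_a` with `s_1*k_1 + ⋯ + s_a*k_a = n`;
in particular `M a 0 = 0` for `a ≥ 1`. -/
def M (a n : ℕ) : ℕ :=
  ∑ f ∈ Finset.univ.filter (fun f : Fin a → Fin (n + 1) × Fin (n + 1) =>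
      (∀ i, 0 < ((f i).1 : ℕ) ∧ 0 < ((f i).2 : ℕ)) ∧
      (∀ i j : Fin a, i ≤ j → (f i).1 ≤ (f j).1) ∧
      (∑ i, ((f i).2 : ℕ) * ((f i).1 : ℕ)) = n),
    ∏ i, ((f i).2 : ℕ)

open PowerSeries

namespace MacMahon

lemma monotone_cons_iff {α : Type*} [Preorder α] {b : ℕ} {x : α} {t : Fin b → α} :
    Monotone (Fin.cons x t : Fin (b + 1) → α) ↔ (∀ i, x ≤ t i) ∧ Monotone t := by
  refine ⟨fun h => ⟨fun i => by simpa using h (Fin.zero_le i.succ),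
    fun i j hij => by simpa using h (Fin.succ_le_succ_iff.2 hij)⟩, fun ⟨hx, ht⟩ => ?_⟩
  intro i j hij
  cases i using Fin.cases with
  | zero => cases j using Fin.cases with
    | zero => exact le_rfl
    | succ j => simpa using hx j
  | succ i => cases j using Fin.cases with
    | zero => exact absurd hij (by simp)
    | succ j => simpa using ht (Fin.succ_le_succ_iff.1 hij)

lemma one_sub_sq_mul_sum_Icc_mul_pow {R : Type*} [CommRing R] (y : R) (N : ℕ) :
    (1 - y) ^ 2 * ∑ s ∈ Icc 1 N, (s : R) * y ^ s = y - (N + 1) * y ^ (N + 1) + N * y ^ (N + 2) := by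
  induction N with
  | zero => simp
  | succ N ih =>
    rw [sum_Icc_succ_top (by omega), mul_add, ih]
    push_cast
    ring

section CompleteHomogeneous

variable {R : Type*} [CommSemiring R] (f : ℕ → R)

def monotoneTuples (b K N : ℕ) : Finset (Fin b → ℕ) :=
  {k ∈ Fintype.piFinset fun _ => Icc K N | Monotone k}

lemma mem_monotoneTuples {b K N : ℕ} {k : Fin b → ℕ} :
    k ∈ monotoneTuples b K N ↔ (∀ i, k i ∈ Icc K N) ∧ Monotone k := by
  simp [monotoneTuples]

def completeHom (b K N : ℕ) : R := ∑ k ∈ monotoneTuples b K N, ∏ i, f (k i)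

def completeHomUpTo (c K N : ℕ) : R := ∑ b ∈ range (c + 1), completeHom f b K N

@[simp] lemma completeHom_zero (K N : ℕ) : completeHom f 0 K N = 1 := by
  simp [completeHom, monotoneTuples, Subsingleton.monotone]

lemma completeHom_succ_of_lt {K N : ℕ} (b : ℕ) (h : N < K) : completeHom f (b + 1) K N = 0 := by
  refine sum_eq_zero fun k hk => ?_
  have := (mem_monotoneTuples.1 hk).1 0
  grind

lemma completeHom_succ {K N : ℕ} (b : ℕ) (h : K ≤ N) :
    completeHom f (b + 1) K N = f K * completeHom f b K N + completeHom f (b + 1) (K + 1) N := by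
  rw [completeHom, ← sum_filter_add_sum_filter_not _ (fun k => k 0 = K)]
  congr 1
  · rw [completeHom, mul_sum]
    refine sum_nbij' Fin.tail (fun t => Fin.cons K t) ?_ ?_ ?_ ?_ ?_
    · intro k hk
      obtain ⟨hk, -⟩ := mem_filter.1 hk
      obtain ⟨hval, hmono⟩ := mem_monotoneTuples.1 hk
      exact mem_monotoneTuples.2 ⟨fun i => hval i.succ, hmono.comp (Fin.strictMono_succ.monotone)⟩
    · intro t ht
      obtain ⟨hval, hmono⟩ := mem_monotoneTuples.1 ht
      refine mem_filter.2 ⟨mem_monotoneTuples.2 ⟨fun i => ?_, ?_⟩, rfl⟩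
      · cases i using Fin.cases with
        | zero => simpa using h
        | succ i => simpa using hval i
      · exact monotone_cons_iff.2 ⟨fun i => (mem_Icc.1 (hval i)).1, hmono⟩
    · intro k hk
      simp [← (mem_filter.1 hk).2]
    · intro t _
      exact Fin.tail_cons _ _
    · intro k hk
      rw [Fin.prod_univ_succ, (mem_filter.1 hk).2]
      rfl
  · rw [completeHom]
    congr 1
    ext k
    simp only [mem_filter, mem_monotoneTuples, mem_Icc]
    constructor
    · rintro ⟨⟨hval, hmono⟩, hk0⟩
      exact ⟨fun i => ⟨by grind [hmono (Fin.zero_le i)], (hval i).2⟩, hmono⟩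
    · rintro ⟨hval, hmono⟩
      exact ⟨⟨fun i => ⟨by grind, (hval i).2⟩, hmono⟩, by grind⟩

@[simp] lemma completeHomUpTo_zero (K N : ℕ) : completeHomUpTo f 0 K N = 1 := by
  simp [completeHomUpTo]

lemma completeHomUpTo_of_lt {K N : ℕ} (c : ℕ) (h : N < K) : completeHomUpTo f c K N = 1 := by
  simp [completeHomUpTo, sum_range_succ', completeHom_succ_of_lt f _ h]

lemma completeHomUpTo_succ {K N : ℕ} (c : ℕ) (h : K ≤ N) :
    completeHomUpTo f (c + 1) K N =
      f K * completeHomUpTo f c K N + completeHomUpTo f (c + 1) (K + 1) N := by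
  simp only [completeHomUpTo, sum_range_succ' _ (c + 1), completeHom_succ f _ h, sum_add_distrib,
    mul_sum, completeHom_zero]
  ring

lemma completeHom_eq_completeHomUpTo_succ {K N : ℕ} (c : ℕ) (h : K ≤ N) (hK : f K = 1) :
    completeHom f c K N = completeHomUpTo f c (K + 1) N := by
  induction c with
  | zero => simp
  | succ c ih =>
    rw [completeHom_succ f c h, hK, one_mul, ih]
    simp only [completeHomUpTo, sum_range_succ]

end CompleteHomogeneous

lemma M_eq_sum (a n : ℕ) : M a n = ∑ k ∈ monotoneTuples a 1 n,
    ∑ s ∈ {s ∈ Fintype.piFinset fun _ => Icc 1 n | ∑ i, s i * k i = n}, ∏ i, s i := by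
  rw [M, sum_sigma']
  have mem_iff (p : (_ : Fin a → ℕ) × (Fin a → ℕ)) : p ∈ (monotoneTuples a 1 n).sigma
      (fun k => {s ∈ Fintype.piFinset fun _ => Icc 1 n | ∑ i, s i * k i = n}) ↔
      ((∀ i, 1 ≤ p.1 i ∧ p.1 i ≤ n) ∧ Monotone p.1) ∧ (∀ i, 1 ≤ p.2 i ∧ p.2 i ≤ n) ∧
        ∑ i, p.2 i * p.1 i = n := by
    simp only [mem_sigma, mem_monotoneTuples, mem_filter, Fintype.mem_piFinset, mem_Icc]
  have mod_eq {x : ℕ} (hx : x ≤ n) : x % (n + 1) = x := Nat.mod_eq_of_lt (Nat.lt_succ_of_le hx)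
  refine sum_nbij' (fun f => ⟨fun i => (f i).1, fun i => (f i).2⟩)
    (fun p i => (Fin.ofNat (n + 1) (p.1 i), Fin.ofNat (n + 1) (p.2 i))) ?_ ?_ ?_ ?_ ?_
  · intro f hf
    obtain ⟨hpos, hmono, hsum⟩ := (mem_filter.1 hf).2
    exact (mem_iff _).2 ⟨⟨fun i => ⟨(hpos i).1, Fin.is_le _⟩, fun i j hij => hmono i j hij⟩,
      fun i => ⟨(hpos i).2, Fin.is_le _⟩, hsum⟩
  · rintro ⟨k, s⟩ hks
    obtain ⟨⟨hk, hmono⟩, hs, hsum⟩ := (mem_iff _).1 hks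
    simp only [mem_filter, mem_univ, true_and, Fin.val_ofNat, fun i => mod_eq (hk i).2,
      fun i => mod_eq (hs i).2]
    exact ⟨fun i => ⟨(hk i).1, (hs i).1⟩, fun i j hij => by
      simpa [Fin.le_def, fun i => mod_eq (hk i).2] using hmono hij, hsum⟩
  · intro f _
    simp
  · rintro ⟨k, s⟩ hks
    obtain ⟨⟨hk, -⟩, hs, -⟩ := (mem_iff _).1 hks
    simp only [Fin.val_ofNat, fun i => mod_eq (hk i).2, fun i => mod_eq (hs i).2]
  · intro f _
    rfl

noncomputable section PowerSeries

variable {𝕜 : Type*} [Field 𝕜]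

def weight (k : ℕ) : 𝕜⟦X⟧ := X ^ (k - 1) * (1 - X) ^ 2 * (1 - X ^ k)⁻¹ ^ 2

lemma one_sub_X_pow_mul_inv {k : ℕ} (hk : k ≠ 0) : (1 - X ^ k : 𝕜⟦X⟧) * (1 - X ^ k)⁻¹ = 1 :=
  PowerSeries.mul_inv_cancel _ (by simp [hk])

@[simp] lemma weight_one : weight 1 = (1 : 𝕜⟦X⟧) := by
  have h := one_sub_X_pow_mul_inv (𝕜 := 𝕜) one_ne_zero
  rw [pow_one] at h
  rw [weight, Nat.sub_self, pow_zero, pow_one, one_mul, ← mul_pow, h, one_pow]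

lemma X_pow_dvd_weight (k : ℕ) : (X : 𝕜⟦X⟧) ^ (k - 1) ∣ weight k :=
  ⟨_, mul_assoc _ _ _⟩

lemma weight_succ_mul_add (k : ℕ) :
    weight (k + 1) * (1 - X ^ (k + 1)) + (1 - X ^ k) * (1 - X ^ (k + 1))⁻¹ * (1 - X ^ (k + 2)) =
      (1 - X ^ (k + 1) : 𝕜⟦X⟧) := by
  have h := one_sub_X_pow_mul_inv (𝕜 := 𝕜) (k := k + 1) (by omega)
  rw [weight, Nat.add_sub_cancel]
  linear_combination (X ^ k * (1 - X) ^ 2 * (1 - X ^ (k + 1))⁻¹ + (1 - X ^ (k + 1))) * h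

-- Untruncated (`c = ∞`) the difference vanishes: `∏_{k=K+1}^{N} 1/(1 - weight k)` telescopes to
-- `(1 - X^(K+1)) (1 - X^N) / ((1 - X^K) (1 - X^(N+1)))`.
theorem X_pow_dvd_one_sub_X_pow_mul_completeHomUpTo_sub {N : ℕ} (c : ℕ) {K : ℕ} (hK : K ≤ N) :
    (X : 𝕜⟦X⟧) ^ ((c + 1) * K) ∣ (1 - X ^ K) * (1 - X ^ (N + 1)) *
      completeHomUpTo weight c (K + 1) N - (1 - X ^ (K + 1)) * (1 - X ^ N) := by
  induction c generalizing K with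
  | zero =>
    obtain ⟨d, rfl⟩ := Nat.exists_eq_add_of_le hK
    rw [completeHomUpTo_zero]
    exact ⟨(1 - X) * (X ^ d - 1), by ring⟩
  | succ c ih =>
    induction hK using Nat.decreasingInduction with
    | self => simp [completeHomUpTo_of_lt _ _ (Nat.lt_succ_self N), mul_comm]
    | of_succ K hKN ihK =>
      have h := one_sub_X_pow_mul_inv (𝕜 := 𝕜) (k := K + 1) (by omega)
      have key := weight_succ_mul_add (𝕜 := 𝕜) K
      rw [completeHomUpTo_succ _ _ hKN]
      set S := completeHomUpTo (weight (𝕜 := 𝕜)) c (K + 1) N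
      set S' := completeHomUpTo (weight (𝕜 := 𝕜)) (c + 1) (K + 1 + 1) N
      have split : (1 - X ^ K) * (1 - X ^ (N + 1)) * (weight (K + 1) * S + S') -
          (1 - X ^ (K + 1)) * (1 - X ^ N) =
          weight (K + 1) * ((1 - X ^ K) * (1 - X ^ (N + 1)) * S - (1 - X ^ (K + 1)) * (1 - X ^ N)) +
          (1 - X ^ K) * (1 - X ^ (K + 1))⁻¹ * ((1 - X ^ (K + 1)) * (1 - X ^ (N + 1)) * S' -
            (1 - X ^ (K + 1 + 1)) * (1 - X ^ N)) := by
        linear_combination (-(1 - X ^ K) * (1 - X ^ (N + 1)) * S') * h + (1 - X ^ N) * key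
      rw [split]
      refine dvd_add ?_ (Dvd.dvd.mul_left ((pow_dvd_pow _ ?_).trans ihK) _)
      · rw [show (c + 1 + 1) * K = K + (c + 1) * K by ring, pow_add]
        exact mul_dvd_mul (X_pow_dvd_weight (K + 1)) (ih hKN.le)
      · exact Nat.mul_le_mul_left _ K.le_succ

lemma X_pow_dvd_one_sub_X_mul_completeHom {a n m : ℕ} (hn : 1 ≤ n) (hma : m ≤ a + 1)
    (hmn : m ≤ n) : (X : 𝕜⟦X⟧) ^ m ∣ (1 - X) * completeHom weight a 1 n - (1 - X ^ 2) := by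
  have h := X_pow_dvd_one_sub_X_pow_mul_completeHomUpTo_sub (𝕜 := 𝕜) a hn
  rw [← completeHom_eq_completeHomUpTo_succ _ a hn weight_one, pow_one, mul_one,
    one_add_one_eq_two] at h
  have split : (1 - X : 𝕜⟦X⟧) * completeHom weight a 1 n - (1 - X ^ 2) =
      ((1 - X) * (1 - X ^ (n + 1)) * completeHom weight a 1 n - (1 - X ^ 2) * (1 - X ^ n)) +
        X ^ n * (X * (1 - X) * completeHom weight a 1 n - (1 - X ^ 2)) := by
    ring
  rw [split]
  exact dvd_add ((pow_dvd_pow X hma).trans h) ((pow_dvd_pow X hmn).mul_right _)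

-- Truncation of `X^k/(1 - X^k)^2 = Σ_{s ≥ 1} s X^(ks)`, exact below degree `N + 1`.
def factorTrunc (N k : ℕ) : 𝕜⟦X⟧ := ∑ s ∈ Icc 1 N, (s : 𝕜⟦X⟧) * (X ^ k) ^ s

lemma X_pow_dvd_one_sub_X_sq_mul_factorTrunc_sub {k : ℕ} (N : ℕ) (hk : k ≠ 0) :
    (X : 𝕜⟦X⟧) ^ (N + 1) ∣ (1 - X) ^ 2 * factorTrunc N k - X * weight k := by
  obtain ⟨j, rfl⟩ : ∃ j, k = j + 1 := ⟨k - 1, by omega⟩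
  have h := one_sub_X_pow_mul_inv (𝕜 := 𝕜) hk
  have closed : (1 - X ^ (j + 1) : 𝕜⟦X⟧) ^ 2 * factorTrunc N (j + 1) = X ^ (j + 1) -
      ((N : 𝕜⟦X⟧) + 1) * (X ^ (j + 1)) ^ (N + 1) + (N : 𝕜⟦X⟧) * (X ^ (j + 1)) ^ (N + 2) :=
    one_sub_sq_mul_sum_Icc_mul_pow (X ^ (j + 1) : 𝕜⟦X⟧) N
  set ι := (1 - X ^ (j + 1) : 𝕜⟦X⟧)⁻¹
  have split : (1 - X : 𝕜⟦X⟧) ^ 2 * factorTrunc N (j + 1) - X * weight (j + 1) =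
      (X ^ (j + 1)) ^ (N + 1) *
        ((1 - X) ^ 2 * ι ^ 2 * ((N : 𝕜⟦X⟧) * X ^ (j + 1) - ((N : 𝕜⟦X⟧) + 1))) := by
    rw [weight, Nat.add_sub_cancel]
    linear_combination (-(1 - X) ^ 2 * factorTrunc N (j + 1) * (1 + (1 - X ^ (j + 1)) * ι)) * h +
      ((1 - X) ^ 2 * ι ^ 2) * closed
  rw [split]
  exact (pow_dvd_pow_of_dvd (dvd_pow_self X j.succ_ne_zero) _).mul_right _

lemma coeff_prod_factorTrunc {a : ℕ} (N n : ℕ) (k : Fin a → ℕ) :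
    coeff n (∏ i, factorTrunc N (k i) : 𝕜⟦X⟧) =
      ∑ s ∈ {s ∈ Fintype.piFinset fun _ => Icc 1 N | ∑ i, s i * k i = n}, ∏ i, (s i : 𝕜) := by
  simp only [factorTrunc, prod_univ_sum, prod_mul_distrib, ← pow_mul', prod_pow_eq_pow_sum,
    map_sum, sum_filter]
  refine sum_congr rfl fun s _ => ?_
  rw [← Nat.cast_prod, ← map_natCast (C (R := 𝕜)), coeff_C_mul_X_pow]
  simp [eq_comm]

lemma M_eq_coeff (a n : ℕ) :
    (M a n : 𝕜) = coeff n (∑ k ∈ monotoneTuples a 1 n, ∏ i, factorTrunc n (k i)) := by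
  simp only [M_eq_sum, map_sum, coeff_prod_factorTrunc, Nat.cast_sum, Nat.cast_prod]

lemma X_pow_dvd_one_sub_X_pow_mul_sum_prod_factorTrunc_sub (a n : ℕ) :
    (X : 𝕜⟦X⟧) ^ (n + 1) ∣ (1 - X) ^ (2 * a) * (∑ k ∈ monotoneTuples a 1 n,
      ∏ i, factorTrunc n (k i)) - X ^ a * completeHom weight a 1 n := by
  rw [completeHom, mul_sum, mul_sum, ← sum_sub_distrib]
  refine dvd_sum fun k hk => ?_
  have hfactor (i : Fin a) : (1 - X) ^ 2 * factorTrunc n (k i) ≡ X * weight (k i)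
      [SMOD Ideal.span {(X : 𝕜⟦X⟧) ^ (n + 1)}] := by
    refine SModEq.sub_mem.2 (Ideal.mem_span_singleton.2 ?_)
    exact X_pow_dvd_one_sub_X_sq_mul_factorTrunc_sub n (by grind [mem_monotoneTuples])
  have hprod := SModEq.prod (s := univ) fun i _ => hfactor i
  rw [prod_mul_distrib, prod_mul_distrib, prod_const, prod_const, card_univ, Fintype.card_fin,
    ← pow_mul] at hprod
  exact Ideal.mem_span_singleton.1 (SModEq.sub_mem.1 hprod)

lemma coeff_X_pow_mul_one_add_X_mul_invOneSubPow {d a n : ℕ} (hd : 0 < d) (h : a ≤ n) :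
    coeff n (X ^ a * ((1 + X) * (invOneSubPow 𝕜 d).val) : 𝕜⟦X⟧) = (d - 1 + (n - a)).choose (d - 1) +
      if a < n then ((d - 1 + (n - a - 1)).choose (d - 1) : 𝕜) else 0 := by
  obtain ⟨m, rfl⟩ := Nat.exists_eq_add_of_le h
  rw [coeff_X_pow_mul', if_pos h, add_mul, one_mul, map_add,
    invOneSubPow_val_eq_mk_sub_one_add_choose_of_pos _ _ hd, coeff_mk, Nat.add_sub_cancel_left]
  cases m with
  | zero => simp
  | succ m => simp [coeff_succ_X_mul]

theorem coeff_sum_prod_factorTrunc {a n : ℕ} (ha : 0 < a) (h1 : a ≤ n) (h2 : n ≤ 2 * a) :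
    coeff n (∑ k ∈ monotoneTuples a 1 n, ∏ i, factorTrunc n (k i) : 𝕜⟦X⟧) =
      (a + n - 1).choose (n - a) +
        if a < n then ((a + n - 2).choose (n - a - 1) : 𝕜) else 0 := by
  set A : 𝕜⟦X⟧ := ∑ k ∈ monotoneTuples a 1 n, ∏ i, factorTrunc n (k i)
  set T := completeHom (weight (𝕜 := 𝕜)) a 1 n
  set V := (invOneSubPow 𝕜 (2 * a)).val
  have hA := X_pow_dvd_one_sub_X_pow_mul_sum_prod_factorTrunc_sub (𝕜 := 𝕜) a n
  have hT : (X : 𝕜⟦X⟧) ^ (n - a + 1) ∣ (1 - X) * T - (1 - X ^ 2) :=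
    X_pow_dvd_one_sub_X_mul_completeHom (by omega) (by omega) (by omega)
  have hV : (1 - X) ^ (2 * a) * V = 1 := by
    rw [← invOneSubPow_inv_eq_one_sub_pow]
    exact (invOneSubPow 𝕜 (2 * a)).inv_val
  have hdvd : (X : 𝕜⟦X⟧) ^ (n + 1) ∣ (1 - X) ^ (2 * a + 1) * (A - X ^ a * ((1 + X) * V)) := by
    have split : (1 - X) ^ (2 * a + 1) * (A - X ^ a * ((1 + X) * V)) =
        (1 - X) * ((1 - X) ^ (2 * a) * A - X ^ a * T) + X ^ a * ((1 - X) * T - (1 - X ^ 2)) := by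
      linear_combination (-X ^ a * (1 + X) * (1 - X)) * hV
    rw [split]
    refine dvd_add (hA.mul_left _) ?_
    rw [show n + 1 = a + (n - a + 1) by omega, pow_add]
    exact mul_dvd_mul_left _ hT
  have hunit : IsUnit ((1 - X : 𝕜⟦X⟧) ^ (2 * a + 1)) :=
    (isUnit_iff_constantCoeff.2 (by simp)).pow _
  have hcoeff := X_pow_dvd_iff.1 (hunit.dvd_mul_left.1 hdvd) n n.lt_succ_self
  rw [map_sub, sub_eq_zero] at hcoeff
  rw [hcoeff, coeff_X_pow_mul_one_add_X_mul_invOneSubPow (by omega) h1, Nat.choose_symm_add,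
    Nat.choose_symm_add, show 2 * a - 1 + (n - a) = a + n - 1 by omega]
  split_ifs with hlt
  · rw [show 2 * a - 1 + (n - a - 1) = a + n - 2 by omega]
  · rfl

end PowerSeries

end MacMahon

/-- if `a ≤ n ≤ 2a` (with `a ≥ 1`), then
`M (a; n) = choose (a+n-1) (n-a) + choose (a+n-2) (n-a-1)`, where the second binomial
coefficient is interpreted as `0` when its lower index `n - a - 1` is negative,
i.e. when `n = a`; in particular `M (a; a) = 1`. -/
theorem M_initial_coefficients (a n : ℕ) (ha : 0 < a) (h1 : a ≤ n) (h2 : n ≤ 2 * a) :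
    M a n = Nat.choose (a + n - 1) (n - a) +
      (if a < n then Nat.choose (a + n - 2) (n - a - 1) else 0) := by
  have h := MacMahon.coeff_sum_prod_factorTrunc (𝕜 := ℚ) ha h1 h2
  rw [← MacMahon.M_eq_coeff] at h
  exact_mod_cast h
end

section
/- Let p ≥ 5 be prime, let m be a positive integer, and set k := 2 + (p−1)p^{m−1}. Then every coefficient of the formal power series (p^m − 1)·E_2(q) − (p−1)·Σ_{i=1}^{m} p^{i−1}·E_k(q^{p^{i−1}}) ∈ ℚ[[q]] is a rational number of p-adic valuation at least m; that is, E_2(q) ≡ ((p−1)/(p^m−1))·Σ_{i=1}^{m} p^{i−1}·E_k(q)|V_{p^{i−1}} (mod p^m), where V_d substitutes q^d for q. In particular, E_2(q) modulo p^m is the reduction of a weight 2 + (p−1)p^{m−1} modular form on SL_2(ℤ). -/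
open Finset PowerSeries

/-- the divisor function `σ_ν(n) = Σ_{d ∣ n} d^ν` -/
def sigmaNu (ν n : ℕ) : ℕ := ∑ d ∈ Nat.divisors n, d ^ ν

/-- The Eisenstein series of even weight `k` as a formal power series:
`E_k(q) = 1 - (2k/B_k) Σ_{n ≥ 1} σ_{k-1}(n) q^n`; for `k = 2j` this is
`1 - (4j/B_{2j}) Σ σ_{2j-1}(n) q^n`.  In particular `Eis 2 = E_2`, `Eis 4 = E_4`,
`Eis 6 = E_6` of the paper. -/
noncomputable def Eis (k : ℕ) : PowerSeries ℚ :=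
  PowerSeries.mk fun n =>
    if n = 0 then 1 else -(2 * k / (bernoulli k)) * (sigmaNu (k - 1) n : ℚ)

/-- The operator `V_d` on `ℚ[[q]]`, substituting `q^d` for `q`. -/
noncomputable def Vop (d : ℕ) (f : PowerSeries ℚ) : PowerSeries ℚ :=
  PowerSeries.mk fun n => if d ∣ n then PowerSeries.coeff (n / d) f else 0

/-!
For `n ≥ 1` the `n`-th coefficient is `-24 (p^m - 1) σ₁(n) + (p - 1) (2k / B_k) Q(n)` with
`Q(n) = ∑_{i < m, p^i ∣ n} p^i σ_{k-1}(n / p^i)`, and two congruences modulo `p^m` make it vanish.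

* `Q(n) ≡ σ₁(n)`: for `p ∤ d` Euler's theorem gives `d^{k-1} ≡ d`, while divisors `p ∣ d`
  contribute `d^{k-1} ≡ 0`.
* Kummer's congruence `(1 - p^{k-1}) B_k / k ≡ (1 - p) B_2 / 2 = (1 - p) / 12`, a `p`-adic unit.
  By Faulhaber's formula and the permutation `a ↦ 2a mod N` of `ℤ/N`, the number
  `(2^j - 1)(1 - p^{j-1}) B_j / j` is the `p`-adic limit of `2^{j-1} ∑ a^{j-1}` over
  `p^M/2 ≤ a < p^M` with `p ∤ a` (Voronoi), and these sums depend on `j` only modulo `φ(p^m)`.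
-/

open scoped Nat ArithmeticFunction.sigma
open ArithmeticFunction

theorem Nat.pow_modEq_pow_of_modEq_totient {x n e e' : ℕ} (hx : x.Coprime n)
    (he : e ≡ e' [MOD n.totient]) : x ^ e ≡ x ^ e' [MOD n] := by
  rcases lt_trichotomy n 1 with hn | rfl | hn
  · obtain rfl : n = 0 := by omega
    rw [Nat.totient_zero, Nat.modEq_zero_iff] at he
    rw [he]
  · exact Nat.modEq_one
  · unfold Nat.ModEq
    rw [Nat.pow_totient_mod hn hx, he, ← Nat.pow_totient_mod hn hx]

theorem Finset.sum_range_mul_mod {M : Type*} [AddCommMonoid M] {c N : ℕ} (hc : c.Coprime N)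
    (g : ℕ → M) : ∑ a ∈ range N, g (c * a % N) = ∑ a ∈ range N, g a := by
  rcases N with _ | n
  · simp
  have hval (x : ZMod (n + 1)) :
      g (ZMod.unitOfCoprime c hc * x).val = g (c * x.val % (n + 1)) := by
    simp [ZMod.val_mul, ZMod.val_natCast, Nat.mul_mod]
  have := Equiv.sum_comp (Units.mulLeft (ZMod.unitOfCoprime c hc)) (fun x => g (ZMod.val x))
  simp only [Units.mulLeft_apply, hval] at this
  exact (Fin.sum_univ_eq_sum_range (fun a => g (c * a % (n + 1))) _).symm.trans
    (this.trans (Fin.sum_univ_eq_sum_range g _))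

theorem IsUltrametricDist.norm_add_le_of_le {E : Type*} [SeminormedAddGroup E]
    [IsUltrametricDist E] {a b : E} {r : ℝ} (ha : ‖a‖ ≤ r) (hb : ‖b‖ ≤ r) : ‖a + b‖ ≤ r :=
  (norm_add_le_max a b).trans (max_le ha hb)

theorem IsUltrametricDist.norm_sub_le_of_le {E : Type*} [SeminormedAddGroup E]
    [IsUltrametricDist E] {a b : E} {r : ℝ} (ha : ‖a‖ ≤ r) (hb : ‖b‖ ≤ r) : ‖a - b‖ ≤ r := by
  rw [sub_eq_add_neg]
  exact norm_add_le_of_le ha (by rwa [norm_neg])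

def upperHalfPowerSum (N e : ℕ) : ℤ := ∑ a ∈ range N with N ≤ 2 * a, (a : ℤ) ^ e

def upperHalfPowerSumCoprime (p N e : ℕ) : ℤ :=
  ∑ a ∈ range N with N ≤ 2 * a ∧ ¬ p ∣ a, (a : ℤ) ^ e

/- Since `a ↦ 2a mod N` permutes `range N`, the left side is `∑ ((2a)^{e+1} - (2a mod N)^{e+1})`,
where only `a ≥ N/2` contribute, and there `(2a)^{e+1} - (2a - N)^{e+1} ≡ (e+1) N (2a)^e`. -/
theorem sq_dvd_two_pow_mul_powerSum_sub (N e : ℕ) (hN : Odd N) :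
    (N : ℤ) ^ 2 ∣ (2 ^ (e + 1) - 1) * ∑ a ∈ range N, (a : ℤ) ^ (e + 1)
      - N * ((e + 1) * 2 ^ e * upperHalfPowerSum N e) := by
  have hperm : ∑ a ∈ range N, (((2 * a) % N : ℕ) : ℤ) ^ (e + 1)
      = ∑ a ∈ range N, (a : ℤ) ^ (e + 1) :=
    Finset.sum_range_mul_mod (Nat.coprime_two_left.mpr hN) (fun a => (a : ℤ) ^ (e + 1))
  have hsum : (2 ^ (e + 1) - 1) * ∑ a ∈ range N, (a : ℤ) ^ (e + 1)
      - N * ((e + 1) * 2 ^ e * upperHalfPowerSum N e)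
      = ∑ a ∈ range N, ((2 * a : ℤ) ^ (e + 1) - (((2 * a) % N : ℕ) : ℤ) ^ (e + 1)
          - if N ≤ 2 * a then N * (e + 1) * (2 * a : ℤ) ^ e else 0) := by
    rw [sum_sub_distrib, sum_sub_distrib, hperm, ← sum_filter, upperHalfPowerSum, mul_sum,
      mul_sum, mul_sum]
    congr 1
    · rw [← sum_sub_distrib]
      exact sum_congr rfl fun a _ => by ring
    · exact sum_congr rfl fun a _ => by ring
  rw [hsum]
  refine dvd_sum fun a ha => ?_
  split_ifs with h
  · have hmod : (2 * a) % N = 2 * a - N := by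
      rw [Nat.mod_eq_sub_mod h, Nat.mod_eq_of_lt (by simp at ha; omega)]
    have hbinom := sq_dvd_add_pow_sub_sub (N : ℤ) (2 * a - N) (e + 1)
    simp only [sub_add_cancel, Nat.add_sub_cancel] at hbinom
    have hpow : (N : ℤ) ^ 2 ∣ N * (e + 1) * ((2 * a : ℤ) ^ e - (2 * a - N : ℤ) ^ e) := by
      have : (N : ℤ) ∣ (2 * a : ℤ) ^ e - (2 * a - N : ℤ) ^ e := by
        simpa using sub_dvd_pow_sub_pow (2 * a : ℤ) (2 * a - N) e
      rw [sq, mul_right_comm]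
      exact (mul_dvd_mul_left (N : ℤ) this).mul_right _
    rw [hmod, Nat.cast_sub h]
    convert dvd_sub hbinom hpow using 1
    push_cast
    ring
  · rw [Nat.mod_eq_of_lt (by omega)]
    push_cast
    simp

theorem upperHalfPowerSum_mul {p : ℕ} (hp : 0 < p) (N e : ℕ) :
    upperHalfPowerSum (p * N) e
      = upperHalfPowerSumCoprime p (p * N) e + p ^ e * upperHalfPowerSum N e := by
  rw [upperHalfPowerSum, ← sum_filter_add_sum_filter_not _ (fun a => ¬ p ∣ a), filter_filter,
    upperHalfPowerSumCoprime, upperHalfPowerSum, mul_sum, filter_filter]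
  congr 1
  have hmul : (range (p * N)).filter (fun a => p * N ≤ 2 * a ∧ ¬ ¬ p ∣ a)
      = ((range N).filter (fun b => N ≤ 2 * b)).map ⟨(p * ·), mul_right_injective₀ hp.ne'⟩ := by
    ext a
    simp only [mem_filter, mem_range, not_not, mem_map, Function.Embedding.coeFn_mk]
    constructor
    · rintro ⟨ha, hle, b, rfl⟩
      exact ⟨b, ⟨by nlinarith, by nlinarith⟩, rfl⟩
    · rintro ⟨b, ⟨hb, hle⟩, rfl⟩
      exact ⟨by nlinarith, by nlinarith, dvd_mul_right p b⟩
  rw [hmul, sum_map]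
  exact sum_congr rfl fun b _ => by push_cast [Function.Embedding.coeFn_mk]; ring

theorem upperHalfPowerSumCoprime_modEq {p : ℕ} (hp : p.Prime) (hp2 : p ≠ 2) {m e e' : ℕ}
    (he : e ≡ e' [MOD φ (p ^ m)]) (N : ℕ) :
    2 ^ e * upperHalfPowerSumCoprime p N e ≡ 2 ^ e' * upperHalfPowerSumCoprime p N e'
      [ZMOD (p ^ m : ℕ)] := by
  simp only [upperHalfPowerSumCoprime, mul_sum]
  refine Int.ModEq.sum fun a ha => ?_
  have hcop : (2 * a).Coprime (p ^ m) := by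
    refine Nat.Coprime.pow_right _ (Nat.Coprime.mul_left ?_ ?_)
    · exact (Nat.coprime_primes Nat.prime_two hp).2 hp2.symm
    · exact Nat.coprime_comm.1 (hp.coprime_iff_not_dvd.2 (mem_filter.1 ha).2.2)
  simpa [← mul_pow] using Int.natCast_modEq_iff.2 (Nat.pow_modEq_pow_of_modEq_totient hcop he)

section Padic

open Filter Topology

variable {p : ℕ} [Fact p.Prime]

theorem exists_norm_powerSum_sub_le (j : ℕ) : ∃ C : ℝ, ∀ N : ℕ,
    ‖((∑ a ∈ range N, (a : ℤ) ^ j : ℤ) : ℚ_[p]) - N * (bernoulli j : ℚ_[p])‖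
      ≤ C * ‖(N : ℚ_[p])‖ ^ 2 := by
  refine ⟨∑ i ∈ range j, ‖((bernoulli i * (j + 1).choose i / (j + 1) : ℚ) : ℚ_[p])‖,
    fun N => ?_⟩
  have hfaulhaber : ((∑ a ∈ range N, (a : ℤ) ^ j : ℤ) : ℚ_[p]) - N * (bernoulli j : ℚ_[p])
      = ∑ i ∈ range j,
          ((bernoulli i * (j + 1).choose i / (j + 1) : ℚ) : ℚ_[p]) * N ^ (j + 1 - i) := by
    have h := congrArg (fun q : ℚ => (q : ℚ_[p])) (sum_range_pow N j)
    push_cast at h ⊢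
    have hlast : (bernoulli j : ℚ_[p]) * ((j + 1).choose j : ℕ) * (N : ℚ_[p]) ^ (j + 1 - j)
        / (j + 1) = N * bernoulli j := by
      have : (j + 1 : ℚ_[p]) ≠ 0 := by exact_mod_cast j.succ_ne_zero
      rw [Nat.choose_succ_self_right, Nat.add_sub_cancel_left]
      field_simp
      push_cast
      ring
    rw [h, sum_range_succ, hlast, add_sub_cancel_right]
    exact sum_congr rfl fun i _ => by ring
  have hN : ‖(N : ℚ_[p])‖ ≤ 1 := by exact_mod_cast Padic.norm_int_le_one N
  rw [hfaulhaber, sum_mul]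
  refine (norm_sum_le _ _).trans (sum_le_sum fun i hi => ?_)
  rw [norm_mul, norm_pow]
  exact mul_le_mul_of_nonneg_left
    (pow_le_pow_of_le_one (norm_nonneg _) hN (by simp at hi; omega)) (norm_nonneg _)

theorem exists_norm_bernoulli_sub_upperHalfPowerSum_le (e : ℕ) : ∃ C : ℝ, ∀ N : ℕ, Odd N →
    ‖(2 ^ (e + 1) - 1) * (bernoulli (e + 1) : ℚ_[p]) - (e + 1) * 2 ^ e * upperHalfPowerSum N e‖
      ≤ C * ‖(N : ℚ_[p])‖ := by
  obtain ⟨C, hC⟩ := exists_norm_powerSum_sub_le (p := p) (e + 1)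
  refine ⟨max C 1, fun N hN => ?_⟩
  obtain ⟨R, hR⟩ := sq_dvd_two_pow_mul_powerSum_sub N e hN
  set S : ℚ_[p] := ((∑ a ∈ range N, (a : ℤ) ^ (e + 1) : ℤ) : ℚ_[p]) with hS
  have hid : (N : ℚ_[p])
      * ((2 ^ (e + 1) - 1) * bernoulli (e + 1) - (e + 1) * 2 ^ e * upperHalfPowerSum N e)
      = N ^ 2 * R - ((2 ^ (e + 1) - 1 : ℤ) : ℚ_[p]) * (S - N * bernoulli (e + 1)) := by
    have := congrArg (fun z : ℤ => (z : ℚ_[p])) hR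
    push_cast at this hS ⊢
    rw [hS]
    linear_combination this
  have hbound : ‖(N : ℚ_[p])‖ * ‖(2 ^ (e + 1) - 1) * (bernoulli (e + 1) : ℚ_[p])
      - (e + 1) * 2 ^ e * upperHalfPowerSum N e‖
      ≤ ‖(N : ℚ_[p])‖ * (max C 1 * ‖(N : ℚ_[p])‖) := by
    rw [← norm_mul, hid]
    refine IsUltrametricDist.norm_sub_le_of_le ?_ ?_
    · rw [norm_mul, norm_pow]
      nlinarith [Padic.norm_int_le_one (p := p) R, le_max_right C 1, norm_nonneg (R : ℚ_[p])]
    · rw [norm_mul]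
      nlinarith [Padic.norm_int_le_one (p := p) (2 ^ (e + 1) - 1), le_max_left C 1, hC N,
        norm_nonneg (S - N * bernoulli (e + 1))]
  exact le_of_mul_le_mul_left hbound (norm_pos_iff.2 (by exact_mod_cast hN.pos.ne'))

theorem tendsto_upperHalfPowerSum (hp : p ≠ 2) (e : ℕ) :
    Tendsto (fun M => ((e + 1) * 2 ^ e * upperHalfPowerSum (p ^ M) e : ℚ_[p])) atTop
      (𝓝 ((2 ^ (e + 1) - 1) * bernoulli (e + 1))) := by
  obtain ⟨C, hC⟩ := exists_norm_bernoulli_sub_upperHalfPowerSum_le (p := p) e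
  have hpow : Tendsto (fun M => C * ‖(p : ℚ_[p]) ^ M‖) atTop (𝓝 0) := by
    simpa using (tendsto_pow_atTop_nhds_zero_of_norm_lt_one
      (Padic.norm_p_lt_one (p := p))).norm.const_mul C
  refine tendsto_iff_norm_sub_tendsto_zero.2
    (squeeze_zero (fun _ => norm_nonneg _) (fun M => ?_) hpow)
  rw [norm_sub_rev]
  simpa using hC _ ((Fact.out : p.Prime).odd_of_ne_two hp).pow

theorem tendsto_upperHalfPowerSumCoprime (hp : p ≠ 2) (e : ℕ) :
    Tendsto (fun M => ((e + 1) * 2 ^ e * upperHalfPowerSumCoprime p (p ^ (M + 1)) e : ℚ_[p]))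
      atTop (𝓝 ((1 - p ^ e) * (2 ^ (e + 1) - 1) * bernoulli (e + 1))) := by
  have h := tendsto_upperHalfPowerSum hp e
  convert (h.comp (tendsto_add_atTop_nat 1)).sub (h.const_mul ((p : ℚ_[p]) ^ e)) using 1
  · funext M
    simp only [Function.comp_apply, pow_succ', upperHalfPowerSum_mul (Fact.out : p.Prime).pos]
    push_cast
    ring
  · congr 1
    ring

/-- Kummer's congruence, in the form obtained from the auxiliary multiplier `2`. -/
theorem norm_bernoulli_sub_bernoulli_le (hp : p ≠ 2) {m e e' : ℕ}
    (he : e ≡ e' [MOD φ (p ^ m)]) :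
    ‖((1 - p ^ e) * (2 ^ (e + 1) - 1) * bernoulli (e + 1) / (e + 1)
      - (1 - p ^ e') * (2 ^ (e' + 1) - 1) * bernoulli (e' + 1) / (e' + 1) : ℚ_[p])‖
      ≤ (p : ℝ) ^ (-m : ℤ) := by
  have h (e : ℕ) :
      Tendsto (fun M => (2 ^ e * upperHalfPowerSumCoprime p (p ^ (M + 1)) e : ℚ_[p])) atTop
        (𝓝 ((1 - p ^ e) * (2 ^ (e + 1) - 1) * bernoulli (e + 1) / (e + 1))) := by
    have he0 : (e + 1 : ℚ_[p]) ≠ 0 := by exact_mod_cast e.succ_ne_zero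
    convert (tendsto_upperHalfPowerSumCoprime hp e).div_const (e + 1 : ℚ_[p]) using 2
    field_simp
  refine le_of_tendsto' ((h e).sub (h e')).norm fun M => ?_
  have := (Padic.norm_int_le_pow_iff_dvd (p := p) _ m).2
    (upperHalfPowerSumCoprime_modEq Fact.out hp he (p ^ (M + 1))).symm.dvd
  push_cast at this
  exact this

theorem norm_natCast_eq_one_of_lt {n : ℕ} (hn0 : n ≠ 0) (hn : n < p) : ‖(n : ℚ_[p])‖ = 1 :=
  Padic.norm_natCast_eq_one_iff.2 (Nat.coprime_of_lt_prime hn0 hn Fact.out)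

theorem norm_one_sub_p : ‖(1 - p : ℚ_[p])‖ = 1 := by
  rw [← norm_neg, neg_sub, ← Padic.norm_natCast_p_sub_one (p := p),
    Nat.cast_sub (Fact.out : p.Prime).one_le, Nat.cast_one]

theorem norm_bernoulli_sub_le_of_modEq_one (hp5 : 5 ≤ p) {m e : ℕ} (hm : 0 < m)
    (he : e ≡ 1 [MOD φ (p ^ m)]) :
    ‖((1 - p ^ e) * bernoulli (e + 1) / (e + 1) - (1 - p) / 12 : ℚ_[p])‖
      ≤ (p : ℝ) ^ (-m : ℤ) := by
  set ε : ℝ := (p : ℝ) ^ (-m : ℤ)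
  set Y : ℚ_[p] := (1 - p ^ e) * bernoulli (e + 1) / (e + 1)
  have hε1 : ε < 1 := zpow_lt_one_of_neg₀ (by exact_mod_cast (by omega : 1 < p)) (by omega)
  have h3 : ‖(3 : ℚ_[p])‖ = 1 := by
    exact_mod_cast norm_natCast_eq_one_of_lt (p := p) (n := 3) (by norm_num) (by omega)
  have h4 : ‖(4 : ℚ_[p])‖ = 1 := by
    exact_mod_cast norm_natCast_eq_one_of_lt (p := p) (n := 4) (by norm_num) (by omega)
  have hkummer : ‖(2 ^ (e + 1) - 1) * Y - (1 - p) / 4‖ ≤ ε := by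
    have := norm_bernoulli_sub_bernoulli_le (p := p) (by omega) he
    rw [bernoulli_two] at this
    convert this using 2
    simp only [Y]
    push_cast
    ring
  have htwo : ‖(2 ^ (e + 1) - 1 : ℚ_[p]) - 3‖ ≤ ε := by
    have hcop : Nat.Coprime 2 (p ^ m) := Nat.Coprime.pow_right _
      ((Nat.coprime_primes Nat.prime_two Fact.out).2 (by omega))
    have := (Padic.norm_int_le_pow_iff_dvd (p := p) _ m).2 (Int.natCast_modEq_iff.2
      (Nat.pow_modEq_pow_of_modEq_totient hcop (he.add_right 1))).symm.dvd
    convert this using 2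
    push_cast
    ring
  have hunit : ‖(2 ^ (e + 1) - 1 : ℚ_[p])‖ = 1 :=
    h3 ▸ Padic.norm_eq_of_norm_sub_lt_right (htwo.trans_lt (h3 ▸ hε1))
  have hY : ‖Y‖ ≤ 1 := by
    have : ‖(2 ^ (e + 1) - 1) * Y - (1 - p) / 4 + (1 - p) / 4‖ ≤ 1 :=
      IsUltrametricDist.norm_add_le_of_le (hkummer.trans hε1.le)
        (by rw [norm_div, norm_one_sub_p, h4, div_one])
    rwa [sub_add_cancel, norm_mul, hunit, one_mul] at this
  have h3Y : ‖3 * Y - (1 - p) / 4‖ ≤ ε := by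
    have : 3 * Y - (1 - p) / 4
        = ((2 ^ (e + 1) - 1) * Y - (1 - p) / 4) - ((2 ^ (e + 1) - 1 : ℚ_[p]) - 3) * Y := by
      ring
    rw [this]
    refine IsUltrametricDist.norm_sub_le_of_le hkummer ?_
    rw [norm_mul]
    nlinarith [norm_nonneg Y, norm_nonneg ((2 ^ (e + 1) - 1 : ℚ_[p]) - 3)]
  have : Y - (1 - p) / 12 = (3 * Y - (1 - p) / 4) / 3 := by ring
  rwa [this, norm_div, h3, div_one]

end Padic

/-- The `n`-th coefficient of `∑_{i < m} p^i σ_ν|V_{p^i}`. -/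
def sigmaVSum (p m ν n : ℕ) : ℕ := ∑ i ∈ range m with p ^ i ∣ n, p ^ i * σ ν (n / p ^ i)

section Sigma

variable {p : ℕ} (hp : p.Prime)
include hp

theorem sigma_eq_sigma_ordProj_mul_sigma_ordCompl (k : ℕ) {n : ℕ} (hn : n ≠ 0) :
    σ k n = σ k (ordProj[p] n) * σ k (ordCompl[p] n) := by
  conv_lhs => rw [← Nat.ordProj_mul_ordCompl_eq_self n p]
  exact isMultiplicative_sigma.map_mul_of_coprime ((Nat.coprime_ordCompl hp hn).pow_left _)

theorem sigma_modEq_sigma_one_ordCompl {m ν n : ℕ} (hν : ν ≡ 1 [MOD φ (p ^ m)]) (hmν : m ≤ ν)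
    (hn : n ≠ 0) : σ ν n ≡ σ 1 (ordCompl[p] n) [MOD p ^ m] := by
  have hproj : σ ν (ordProj[p] n) ≡ 1 [MOD p ^ m] := by
    rw [sigma_apply_prime_pow hp, sum_range_succ', zero_mul, pow_zero]
    simpa using Nat.ModEq.add_right 1 (Nat.ModEq.sum_zero fun i _ =>
      Nat.modEq_zero_iff_dvd.2 (pow_dvd_pow p (by nlinarith)))
  have hcompl : σ ν (ordCompl[p] n) ≡ σ 1 (ordCompl[p] n) [MOD p ^ m] := by
    rw [sigma_apply, sigma_apply]
    refine Nat.ModEq.sum fun d hd => ?_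
    have hd : d.Coprime (p ^ m) := Nat.Coprime.pow_right _
      (Nat.Coprime.coprime_dvd_left (Nat.mem_divisors.1 hd).1 (Nat.coprime_ordCompl hp hn).symm)
    simpa using Nat.pow_modEq_pow_of_modEq_totient hd hν
  simpa [← sigma_eq_sigma_ordProj_mul_sigma_ordCompl hp ν hn] using hproj.mul hcompl

theorem sigmaVSum_modEq_sigma_one {m ν n : ℕ} (hν : ν ≡ 1 [MOD φ (p ^ m)]) (hmν : m ≤ ν)
    (hn : n ≠ 0) : sigmaVSum p m ν n ≡ σ 1 n [MOD p ^ m] := by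
  set a := n.factorization p
  have hfilter : (range m).filter (p ^ · ∣ n) = (range (a + 1)).filter (· < m) := by
    ext i
    simp only [mem_filter, mem_range, hp.pow_dvd_iff_le_factorization hn]
    omega
  calc sigmaVSum p m ν n
      ≡ ∑ i ∈ range m with p ^ i ∣ n, p ^ i * σ 1 (ordCompl[p] n) [MOD p ^ m] := by
        refine Nat.ModEq.sum fun i hi => Nat.ModEq.mul_left _ ?_
        have hi := (mem_filter.1 hi).2
        rw [← Nat.ordCompl_div_pow_of_dvd i hp hi]
        exact sigma_modEq_sigma_one_ordCompl hp hν hmν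
          ((Nat.div_ne_zero_iff_of_dvd hi).2 ⟨hn, pow_ne_zero _ hp.ne_zero⟩)
    _ = ∑ i ∈ range (a + 1) with i < m, p ^ i * σ 1 (ordCompl[p] n) := by rw [hfilter]
    _ ≡ ∑ i ∈ range (a + 1) with i < m, p ^ i * σ 1 (ordCompl[p] n)
          + ∑ i ∈ range (a + 1) with ¬ i < m, p ^ i * σ 1 (ordCompl[p] n) [MOD p ^ m] :=
        (Nat.ModEq.add_left _ (Nat.ModEq.sum_zero fun i hi => Nat.modEq_zero_iff_dvd.2
          ((pow_dvd_pow p (not_lt.1 (mem_filter.1 hi).2)).mul_right _))).symm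
    _ = ∑ i ∈ range (a + 1), p ^ i * σ 1 (ordCompl[p] n) := sum_filter_add_sum_filter_not _ _ _
    _ = σ 1 n := by
        rw [sigma_eq_sigma_ordProj_mul_sigma_ordCompl hp 1 hn, sigma_one_apply_prime_pow hp,
          sum_mul]

end Sigma

theorem sigmaNu_eq_sigma (ν n : ℕ) : sigmaNu ν n = σ ν n := sigma_apply.symm

theorem coeff_zero_Vop (d : ℕ) (f : PowerSeries ℚ) : coeff 0 (Vop d f) = coeff 0 f := by
  simp [Vop]

theorem coeff_zero_Eis (k : ℕ) : coeff 0 (Eis k) = 1 := by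
  simp [Eis]

theorem coeff_Eis_of_ne_zero (k : ℕ) {n : ℕ} (hn : n ≠ 0) :
    coeff n (Eis k) = -(2 * k / bernoulli k) * σ (k - 1) n := by
  simp [Eis, hn, sigmaNu_eq_sigma]

theorem coeff_Eis_two_of_ne_zero {n : ℕ} (hn : n ≠ 0) : coeff n (Eis 2) = -24 * σ 1 n := by
  rw [coeff_Eis_of_ne_zero 2 hn, bernoulli_two]
  norm_num

theorem coeff_sum_Vop_Eis (p m k : ℕ) {n : ℕ} (hn : n ≠ 0) :
    coeff n (∑ i ∈ range m, C ((p : ℚ) ^ i) * Vop (p ^ i) (Eis k))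
      = -(2 * k / bernoulli k) * sigmaVSum p m (k - 1) n := by
  rw [map_sum, sigmaVSum, Nat.cast_sum, mul_sum, sum_filter]
  refine sum_congr rfl fun i _ => ?_
  rw [coeff_C_mul, Vop, coeff_mk]
  split_ifs with hi
  · rw [coeff_Eis_of_ne_zero k ((Nat.div_ne_zero_iff_of_dvd hi).2 ⟨hn, fun h => hn (by simp_all)⟩)]
    push_cast
    ring
  · simp

theorem eq_zero_or_le_padicValRat_of_norm_le {p : ℕ} [Fact p.Prime] {q : ℚ} {m : ℤ}
    (h : ‖(q : ℚ_[p])‖ ≤ (p : ℝ) ^ (-m)) : q = 0 ∨ m ≤ padicValRat p q := by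
  refine or_iff_not_imp_left.2 fun hq => ?_
  rw [Padic.eq_padicNorm, padicNorm.eq_zpow_of_nonzero hq] at h
  push_cast at h
  exact neg_le_neg_iff.1
    ((zpow_le_zpow_iff_right₀ (by exact_mod_cast (Fact.out : p.Prime).one_lt)).1 h)

theorem norm_E2_combination_le {p : ℕ} [Fact p.Prime] (hp5 : 5 ≤ p) {m e n : ℕ} (hm : 0 < m)
    (he : e ≡ 1 [MOD φ (p ^ m)]) (hme : m ≤ e) (hn : n ≠ 0) :
    ‖((((p : ℚ) ^ m - 1) * (-24 * σ 1 n)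
      - ((p : ℚ) - 1) * (-(2 * (e + 1) / bernoulli (e + 1)) * sigmaVSum p m e n) : ℚ) : ℚ_[p])‖
      ≤ (p : ℝ) ^ (-m : ℤ) := by
  set ε : ℝ := (p : ℝ) ^ (-m : ℤ)
  -- `2k / B_k = 2 (1 - p^e) / Y`, and `Y ≡ (1 - p)/12` is a unit: bound `Y` times the coefficient.
  set Y : ℚ_[p] := (1 - p ^ e) * bernoulli (e + 1) / (e + 1)
  have hε1 : ε < 1 := zpow_lt_one_of_neg₀ (by exact_mod_cast (by omega : 1 < p)) (by omega)
  have hY := norm_bernoulli_sub_le_of_modEq_one hp5 hm he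
  have h12 : ‖(1 - p : ℚ_[p]) / 12‖ = 1 := by
    rw [norm_div, norm_one_sub_p, show (12 : ℚ_[p]) = (3 : ℕ) * (4 : ℕ) by norm_num, norm_mul,
      norm_natCast_eq_one_of_lt (by norm_num) (by omega),
      norm_natCast_eq_one_of_lt (by norm_num) (by omega)]
    norm_num
  have hY1 : ‖Y‖ = 1 := h12 ▸ Padic.norm_eq_of_norm_sub_lt_right (hY.trans_lt (h12 ▸ hε1))
  have hB : (bernoulli (e + 1) : ℚ_[p]) ≠ 0 := fun h => by simp [Y, h] at hY1
  obtain ⟨r, hr⟩ :=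
    Nat.modEq_iff_dvd.1 (sigmaVSum_modEq_sigma_one (Fact.out : p.Prime) he hme hn)
  set Q := sigmaVSum p m e n
  have hid : Y * ((((p : ℚ) ^ m - 1) * (-24 * σ 1 n)
      - ((p : ℚ) - 1) * (-(2 * (e + 1) / bernoulli (e + 1)) * Q) : ℚ) : ℚ_[p])
      = p ^ m * (Y * ((-24 * σ 1 n : ℤ) : ℚ_[p]) - ((2 * (p - 1) * r : ℤ) : ℚ_[p]))
        + ((24 * σ 1 n : ℤ) : ℚ_[p]) * (Y - (1 - p) / 12)
        - ((2 * (p - 1) * Q : ℤ) : ℚ_[p]) * p ^ e := by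
    have hr' := congrArg (fun z : ℤ => (z : ℚ_[p])) hr
    have he0 : (e + 1 : ℚ_[p]) ≠ 0 := by exact_mod_cast e.succ_ne_zero
    simp only [Y]
    push_cast at hr' ⊢
    field_simp
    linear_combination -24 * ((p : ℚ_[p]) - 1) * (e + 1) * hr'
  have hint (z : ℤ) : ‖(z : ℚ_[p])‖ ≤ 1 := Padic.norm_int_le_one z
  rw [← one_mul ‖_‖, ← hY1, ← norm_mul, hid]
  refine IsUltrametricDist.norm_sub_le_of_le (IsUltrametricDist.norm_add_le_of_le ?_ ?_) ?_
  · rw [norm_mul, Padic.norm_p_pow]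
    refine mul_le_of_le_one_right (by positivity)
      (IsUltrametricDist.norm_sub_le_of_le ?_ (hint _))
    rw [norm_mul, hY1, one_mul]
    exact hint _
  · rw [norm_mul]
    exact (mul_le_of_le_one_left (norm_nonneg _) (hint _)).trans hY
  · rw [norm_mul, Padic.norm_p_pow]
    refine (mul_le_of_le_one_left (by positivity) (hint _)).trans ?_
    exact zpow_le_zpow_right₀ (by exact_mod_cast (Fact.out : p.Prime).one_le) (by omega)

/-- let `p ≥ 5` be prime, `m ≥ 1`, and `k = 2 + (p−1)p^{m−1}`. Then every
coefficient of `(p^m − 1)·E_2(q) − (p−1)·Σ_{i=1}^{m} p^{i−1}·E_k(q^{p^{i−1}})` has `p`-adic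
valuation at least `m` (a coefficient equal to `0` having valuation `+∞`); that is,
`E_2 ≡ ((p−1)/(p^m−1))·Σ_{i=1}^{m} p^{i−1}·E_k|V_{p^{i−1}} (mod p^m)`. -/
theorem E2_padic_congruence (p m : ℕ) (hp : p.Prime) (hp5 : 5 ≤ p) (hm : 0 < m)
    (n : ℕ) :
    PowerSeries.coeff n
        (PowerSeries.C ((p : ℚ) ^ m - 1) * Eis 2 -
          PowerSeries.C ((p : ℚ) - 1) *
            ∑ i ∈ Finset.range m,
              PowerSeries.C ((p : ℚ) ^ i) * Vop (p ^ i) (Eis (2 + (p - 1) * p ^ (m - 1)))) = 0 ∨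
    (m : ℤ) ≤ padicValRat p (PowerSeries.coeff n
        (PowerSeries.C ((p : ℚ) ^ m - 1) * Eis 2 -
          PowerSeries.C ((p : ℚ) - 1) *
            ∑ i ∈ Finset.range m,
              PowerSeries.C ((p : ℚ) ^ i) * Vop (p ^ i) (Eis (2 + (p - 1) * p ^ (m - 1))))) := by
  have := Fact.mk hp
  have hweight : 2 + (p - 1) * p ^ (m - 1) = (1 + φ (p ^ m)) + 1 := by
    rw [Nat.totient_prime_pow hp hm]
    ring
  have he : 1 + φ (p ^ m) ≡ 1 [MOD φ (p ^ m)] := by simp [Nat.ModEq]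
  have hme : m ≤ 1 + φ (p ^ m) := by
    have := Nat.lt_pow_self (n := m - 1) hp.one_lt
    have := Nat.le_mul_of_pos_right (p ^ (m - 1)) (Nat.sub_pos_of_lt hp.one_lt)
    rw [Nat.totient_prime_pow hp hm]
    omega
  rw [hweight]
  rcases eq_or_ne n 0 with rfl | hn
  · left
    rw [map_sub, coeff_C_mul, coeff_C_mul, map_sum]
    simp only [coeff_C_mul, coeff_zero_Vop, coeff_zero_Eis, mul_one]
    linear_combination -geom_sum_mul (p : ℚ) m
  · refine eq_zero_or_le_padicValRat_of_norm_le ?_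
    rw [map_sub, coeff_C_mul, coeff_C_mul, coeff_sum_Vop_Eis p m _ hn,
      coeff_Eis_two_of_ne_zero hn, Nat.add_sub_cancel]
    exact_mod_cast norm_E2_combination_le hp5 hm he hme hn
end

section
/- The numbers b_t(a) := (−4)^t·(2t+1)!·w_t(a) satisfy the recursion b_t(a) = (1/(8a(2a+1)))·[(2a−1)²·b_t(a−1) − 8t(2t+1)·b_{t−1}(a−1)] for all integers a ≥ 1 and 0 ≤ t ≤ a, where b_0(0) := 1 and b_t(a) := 0 whenever t < 0 or t > a. Equivalently, 8a(2a+1)·w_t(a) = (2a−1)²·w_t(a−1) + w_{t−1}(a−1) with the conventions w_a(a−1) := 0 and w_{−1}(a−1) := 0. -/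
open Finset

/-- The weights `w_t(a) = (C(2a,a)/(16^a (2a+1))) Σ_{0 ≤ ℓ_1 < ⋯ < ℓ_t < a} ∏_j 1/(2ℓ_j+1)²`
(the inner sum is `1` when `t = 0`, and empty when `t > a`). -/
def w (t a : ℕ) : ℚ :=
  (((2*a).choose a : ℚ) / (16 ^ a * (2 * a + 1))) *
    ∑ f ∈ Finset.univ.filter (fun f : Fin t → Fin a => ∀ i j, i < j → f i < f j),
      ∏ j, 1 / ((2 * ((f j : ℕ) : ℚ) + 1) ^ 2)

/-- `b_t(a) = (−4)^t·(2t+1)!·w_t(a)` for `0 ≤ t ≤ a`, and `b_t(a) = 0` for `t < 0` or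
`t > a` (for `0 ≤ t ≤ a` this is consistent, since `w_t(a) = 0` whenever `t > a`);
`b_0(0) = 1`. -/
def b (t : ℤ) (a : ℕ) : ℚ :=
  if 0 ≤ t ∧ t ≤ (a : ℤ) then
    (-4 : ℚ) ^ t.toNat * ((2 * t.toNat + 1).factorial : ℚ) * w t.toNat a
  else 0

/-!
With `x_ℓ = 1/(2ℓ+1)²`, strictly increasing tuples `Fin t → Fin a` are the `t`-subsets of
`{0, …, a-1}`, so `w_t(a) = c(a) · e_t(x_0, …, x_{a-1})` with `c(a) = C(2a,a)/(16^a (2a+1))` and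
`e_t` the elementary symmetric polynomial. Adjoining `x_a` gives
`e_t(x_0, …, x_a) = e_t(x_0, …, x_{a-1}) + x_a e_{t-1}(x_0, …, x_{a-1})`, and
`(a+1) C(2a+2,a+1) = 2(2a+1) C(2a,a)` gives `8(a+1)(2a+3) c(a+1) = (2a+1)² c(a)`; together they
yield the recursion for `w`. Since `w_t(a) = 0` for `t > a`, the formula
`b_t(a) = (-4)^t (2t+1)! w_t(a)` holds for every `t ≥ 0`, and the recursion for `b` follows from
`(2t+1)! = (2t+1)(2t) (2t-1)!`.
-/

theorem Finset.sum_strictMono_prod_eq_sum_powersetCard {α R : Type*} [Fintype α] [LinearOrder α]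
    [CommSemiring R] (g : α → R) (t : ℕ) :
    ∑ f ∈ univ.filter (fun f : Fin t → α => ∀ i j, i < j → f i < f j), ∏ j, g (f j) =
      ∑ s ∈ powersetCard t univ, ∏ i ∈ s, g i := by
  classical
  refine sum_bij (fun f _ => univ.image f) (fun f hf => ?_) (fun f hf f' hf' himage => ?_)
    (fun s hs => ?_) (fun f hf => ?_)
  · rw [mem_filter] at hf
    simp [card_image_of_injective _ (StrictMono.injective hf.2)]
  · rw [mem_filter] at hf hf'
    rw [← StrictMono.range_inj hf.2 hf'.2, ← Set.image_univ, ← Set.image_univ, ← coe_univ,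
      ← coe_image, ← coe_image, himage]
  · have hcard := (mem_powersetCard.1 hs).2
    exact ⟨s.orderEmbOfFin hcard, by simp, image_orderEmbOfFin_univ s hcard⟩
  · rw [mem_filter] at hf
    rw [prod_image fun i _ j _ h => StrictMono.injective hf.2 h]

theorem Finset.sum_powersetCard_univ_fin_prod_eq_esymm {R : Type*} [CommSemiring R] (g : ℕ → R)
    (t a : ℕ) :
    ∑ s ∈ powersetCard t (univ : Finset (Fin a)), ∏ i ∈ s, g i =
      ((Multiset.range a).map g).esymm t := by
  rw [← range_val, esymm_map_val, ← Nat.Iio_eq_range, ← Fin.map_valEmbedding_univ,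
    powersetCard_map, sum_map]
  simp [prod_map]

namespace Multiset

variable {R : Type*} [CommSemiring R]

theorem esymm_zero (s : Multiset R) : s.esymm 0 = 1 := by
  simp [esymm]

theorem esymm_eq_zero_of_card_lt {s : Multiset R} {n : ℕ} (h : card s < n) : s.esymm n = 0 := by
  simp [esymm, powersetCard_eq_empty _ h]

theorem esymm_cons_succ (x : R) (s : Multiset R) (n : ℕ) :
    (x ::ₘ s).esymm (n + 1) = s.esymm (n + 1) + x * s.esymm n := by
  simp only [esymm, powersetCard_cons, map_add, sum_add, map_map, Function.comp_def, prod_cons,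
    sum_map_mul_left]

end Multiset

def wScale (a : ℕ) : ℚ := ((2 * a).choose a : ℚ) / (16 ^ a * (2 * a + 1))

def oddInvSqEsymm (t a : ℕ) : ℚ :=
  ((Multiset.range a).map fun ℓ : ℕ => 1 / (2 * (ℓ : ℚ) + 1) ^ 2).esymm t

theorem w_eq_wScale_mul (t a : ℕ) : w t a = wScale a * oddInvSqEsymm t a := by
  rw [w, wScale, oddInvSqEsymm, ← sum_powersetCard_univ_fin_prod_eq_esymm,
    ← sum_strictMono_prod_eq_sum_powersetCard (fun i : Fin a => 1 / (2 * ((i : ℕ) : ℚ) + 1) ^ 2)]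

theorem w_eq_zero_of_lt {t a : ℕ} (h : a < t) : w t a = 0 := by
  rw [w_eq_wScale_mul, oddInvSqEsymm, Multiset.esymm_eq_zero_of_card_lt (by simpa), mul_zero]

theorem wScale_succ (n : ℕ) :
    8 * ((n : ℚ) + 1) * (2 * n + 3) * wScale (n + 1) = (2 * n + 1) ^ 2 * wScale n := by
  have hbinom : ((n : ℚ) + 1) * ((2 * (n + 1)).choose (n + 1) : ℕ) =
      2 * (2 * n + 1) * ((2 * n).choose n : ℕ) := by
    exact_mod_cast Nat.succ_mul_centralBinom_succ n
  simp only [wScale]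
  push_cast
  rw [pow_succ]
  field_simp
  linear_combination (8 * (2 * (n : ℚ) + 3)) * hbinom

theorem oddInvSqEsymm_succ_succ (t n : ℕ) :
    oddInvSqEsymm (t + 1) (n + 1) =
      oddInvSqEsymm (t + 1) n + 1 / (2 * (n : ℚ) + 1) ^ 2 * oddInvSqEsymm t n := by
  simp only [oddInvSqEsymm, Multiset.range_succ, Multiset.map_cons, Multiset.esymm_cons_succ]

theorem w_succ (t n : ℕ) :
    8 * ((n : ℚ) + 1) * (2 * n + 3) * w t (n + 1) =
      (2 * n + 1) ^ 2 * w t n + if t = 0 then 0 else w (t - 1) n := by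
  have hscale := wScale_succ n
  cases t with
  | zero =>
    simp only [w_eq_wScale_mul, oddInvSqEsymm, Multiset.esymm_zero, if_pos]
    linear_combination hscale
  | succ t =>
    simp only [w_eq_wScale_mul, oddInvSqEsymm_succ_succ, add_tsub_cancel_right,
      if_neg (Nat.succ_ne_zero t)]
    have hodd : (2 * (n : ℚ) + 1) ≠ 0 := by positivity
    field_simp
    linear_combination (oddInvSqEsymm (t + 1) n * (2 * n + 1) ^ 2 + oddInvSqEsymm t n) * hscale

theorem b_natCast (k a : ℕ) : b k a = (-4) ^ k * ((2 * k + 1).factorial : ℚ) * w k a := by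
  by_cases hk : k ≤ a
  · simp [b, hk]
  · simp [b, hk, w_eq_zero_of_lt (not_le.1 hk)]

theorem b_succ (k n : ℕ) :
    8 * ((n : ℚ) + 1) * (2 * n + 3) * b k (n + 1) =
      (2 * n + 1) ^ 2 * b k n - 8 * k * (2 * k + 1) * b (k - 1) n := by
  cases k with
  | zero =>
    have hneg : b ((0 : ℕ) - 1) n = 0 := by simp [b]
    rw [hneg, b_natCast, b_natCast]
    simpa using w_succ 0 n
  | succ m =>
    have hpred : ((m + 1 : ℕ) : ℤ) - 1 = m := by push_cast; ring
    have hw := w_succ (m + 1) n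
    simp only [add_tsub_cancel_right, if_neg (Nat.succ_ne_zero m)] at hw
    rw [hpred, b_natCast, b_natCast, b_natCast, show 2 * (m + 1) + 1 = 2 * m + 1 + 1 + 1 by ring,
      Nat.factorial_succ, Nat.factorial_succ]
    push_cast
    linear_combination (-4 : ℚ) ^ (m + 1) * (2 * m + 3) * (2 * m + 2) *
      ((2 * m + 1).factorial : ℚ) * hw

theorem b_recursion_general (a : ℕ) (ha : 1 ≤ a) (t : ℤ) (ht0 : 0 ≤ t) :
    b t a = 1 / (8 * (a : ℚ) * (2 * a + 1)) *
        ((2 * (a : ℚ) - 1) ^ 2 * b t (a - 1) - 8 * (t : ℚ) * (2 * (t : ℚ) + 1) * b (t - 1) (a - 1)) ∧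
    8 * (a : ℚ) * (2 * a + 1) * w t.toNat a =
      (2 * (a : ℚ) - 1) ^ 2 * w t.toNat (a - 1) +
        (if t = 0 then 0 else w (t - 1).toNat (a - 1)) := by
  obtain ⟨n, rfl⟩ := Nat.exists_eq_add_of_le' ha
  lift t to ℕ using ht0 with k
  have hpred : ((k : ℤ) - 1).toNat = k - 1 := by omega
  refine ⟨?_, ?_⟩
  · rw [one_div_mul_eq_div, eq_div_iff (by positivity)]
    push_cast
    linear_combination b_succ k n
  · simp only [Int.toNat_natCast, hpred, Nat.cast_eq_zero, add_tsub_cancel_right]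
    push_cast
    linear_combination w_succ k n

/-- for `a ≥ 1` and `0 ≤ t ≤ a`, the numbers `b_t(a)` satisfy
`b_t(a) = (1/(8a(2a+1)))·[(2a−1)²·b_t(a−1) − 8t(2t+1)·b_{t−1}(a−1)]`; equivalently,
`8a(2a+1)·w_t(a) = (2a−1)²·w_t(a−1) + w_{t−1}(a−1)` with the conventions
`w_a(a−1) = 0` and `w_{−1}(a−1) = 0`. -/
theorem b_recursion (a : ℕ) (ha : 1 ≤ a) (t : ℤ) (ht0 : 0 ≤ t) (hta : t ≤ (a : ℤ)) :
    b t a = 1 / (8 * (a : ℚ) * (2 * a + 1)) *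
        ((2 * (a : ℚ) - 1) ^ 2 * b t (a - 1) - 8 * (t : ℚ) * (2 * (t : ℚ) + 1) * b (t - 1) (a - 1)) ∧
    8 * (a : ℚ) * (2 * a + 1) * w t.toNat a =
      (2 * (a : ℚ) - 1) ^ 2 * w t.toNat (a - 1) +
        (if t = 0 then 0 else w (t - 1).toNat (a - 1)) :=
  b_recursion_general a ha t ht0
end
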